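/- arXiv:1411.3260 — 5 statements merged into one kernel-verified Lean document; each statement's English description precedes it below -/
import Mathlib

section
/- Let s : ℝⁿ × ℝⁿ → ℝ be continuous with c₁|q| ≤ s(x,q) ≤ c₂|q| for constants 0 < c₁ ≤ c₂, and let S(y,x) be the infimum of ∫₀ᵗ s(ξ(r), ξ'(r)) dr over piecewise continuously differentiable curves ξ : [0,t] → ℝⁿ joining y to x. Then S is Lipschitz continuous on ℝⁿ × ℝⁿ: |S(y,x) − S(y',x')| ≤ c₂(|y − y'| + |x − x'|) for all x, x', y, y' ∈ ℝⁿ. -/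
open Set MeasureTheory

/-- The cost of a curve `ξ : [0,t] → ℝⁿ` with respect to the running cost `s`:
`∫₀ᵗ s(ξ(r), ξ'(r)) dr`. -/
noncomputable def pathCost {n : ℕ} (s : EuclideanSpace ℝ (Fin n) → EuclideanSpace ℝ (Fin n) → ℝ)
    (ξ : ℝ → EuclideanSpace ℝ (Fin n)) (t : ℝ) : ℝ :=
  ∫ r in (0:ℝ)..t, s (ξ r) (deriv ξ r)

/-- `ξ : [0,t] → ℝⁿ` (with `t > 0`) is an admissible path from `y` to `x`:
it is continuous on `[0,t]` and piecewise continuously differentiable, i.e. outside a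
finite set `F` of break points it is differentiable with continuous derivative. -/
def IsAdmissiblePath {n : ℕ} (ξ : ℝ → EuclideanSpace ℝ (Fin n)) (t : ℝ)
    (y x : EuclideanSpace ℝ (Fin n)) : Prop :=
  0 < t ∧ ξ 0 = y ∧ ξ t = x ∧ ContinuousOn ξ (Icc 0 t) ∧
  ∃ F : Finset ℝ,
    (∀ r ∈ Icc 0 t \ (F : Set ℝ), DifferentiableAt ℝ ξ r) ∧
    ContinuousOn (deriv ξ) (Icc 0 t \ (F : Set ℝ))

/-- `Sdist s y x` is the infimum of `∫₀ᵗ s(ξ(r), ξ'(r)) dr` over all `t > 0` and all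
admissible (piecewise `C¹`) paths `ξ : [0,t] → ℝⁿ` from `y` to `x`. -/
noncomputable def Sdist {n : ℕ} (s : EuclideanSpace ℝ (Fin n) → EuclideanSpace ℝ (Fin n) → ℝ)
    (y x : EuclideanSpace ℝ (Fin n)) : ℝ :=
  sInf {c : ℝ | ∃ t : ℝ, ∃ ξ : ℝ → EuclideanSpace ℝ (Fin n),
    IsAdmissiblePath ξ t y x ∧ c = pathCost s ξ t}

section helpers
variable {n : ℕ}
local notation "E" => EuclideanSpace ℝ (Fin n)
open scoped Interval

lemma affine_hasDerivAt (y v : E) (r : ℝ) :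
    HasDerivAt (fun r : ℝ => y + r • v) v r := by
  simpa using ((hasDerivAt_id r).smul_const v).const_add y

lemma affine_deriv (y v : E) (r : ℝ) : deriv (fun r : ℝ => y + r • v) r = v :=
  (affine_hasDerivAt y v r).deriv

lemma segment_admissible (y x : E) :
    IsAdmissiblePath (fun r : ℝ => y + r • (x - y)) 1 y x := by
  refine ⟨one_pos, by simp, by simp,
    (continuous_const.add (continuous_id.smul continuous_const)).continuousOn, ∅, ?_, ?_⟩
  · exact fun r _ => (affine_hasDerivAt y (x - y) r).differentiableAt
  · have h : deriv (fun r : ℝ => y + r • (x - y)) = fun _ => x - y :=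
      funext (affine_deriv y (x - y))
    rw [h]; exact continuousOn_const

lemma cwa_piece {f g : ℝ → E} {P : Set ℝ} (hP : IsClosed P) (hg : ContinuousOn g P)
    (heq : EqOn f g P) (r : ℝ) : ContinuousWithinAt f P r := by
  by_cases h : r ∈ P
  · exact ((hg r h).congr heq (heq h))
  · exact continuousWithinAt_of_notMem_closure (by rwa [hP.closure_eq])

lemma ae_of_eqOn_Ioo {f g : ℝ → ℝ} {a b : ℝ} (hab : a ≤ b)
    (h : ∀ u ∈ Ioo a b, f u = g u) :
    ∀ᵐ u : ℝ, u ∈ Ι a b → f u = g u := by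
  filter_upwards [(Set.countable_singleton b).ae_notMem volume] with u hu hmem
  rw [uIoc_of_le hab] at hmem
  exact h u ⟨hmem.1, lt_of_le_of_ne hmem.2 (by simpa using hu)⟩

lemma concat_cost {s : E → E → ℝ}
    (hs : Continuous fun p : E × E => s p.1 p.2)
    {c₂ : ℝ} (hc₂ : 0 < c₂)
    (hub : ∀ x q : E, s x q ≤ c₂ * ‖q‖) (hlb : ∀ x q : E, 0 ≤ s x q)
    {ξ : ℝ → E} {t : ℝ} {y' x' : E} (hξ : IsAdmissiblePath ξ t y' x')
    (y x : E) :
    ∃ (η : ℝ → E) (t' : ℝ), IsAdmissiblePath η t' y x ∧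
      pathCost s η t' ≤ pathCost s ξ t + c₂ * (‖y - y'‖ + ‖x - x'‖) := by
  obtain ⟨ht, hξ0, hξt, hcont, F, hdiff, hdcont⟩ := hξ
  set v1 : E := y' - y with hv1
  set v3 : E := x - x' with hv3
  set η : ℝ → E := fun r =>
    if r ≤ 1 then y + r • v1 else if r ≤ 1 + t then ξ (r - 1)
    else x' + (r - 1 - t) • v3 with hη
  -- pointwise description
  have h1 : ∀ r : ℝ, r ≤ 1 → η r = y + r • v1 := fun r h => if_pos h
  have h2 : ∀ r ∈ Icc (1:ℝ) (1 + t), η r = ξ (r - 1) := by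
    intro r hr
    by_cases h : r ≤ 1
    · have hr1 : r = 1 := le_antisymm h hr.1
      subst hr1
      rw [h1 1 le_rfl]
      simp [hv1, hξ0]
    · simp only [hη, if_neg h, if_pos hr.2]
  have h3 : ∀ r : ℝ, 1 + t < r → η r = x' + (r - 1 - t) • v3 := by
    intro r hr
    have h1' : ¬ r ≤ 1 := by linarith
    have h2' : ¬ r ≤ 1 + t := by linarith
    simp only [hη, if_neg h1', if_neg h2']
  have h3' : ∀ r ∈ Icc (1 + t) (t + 2), η r = x' + (r - 1 - t) • v3 := by
    intro r hr
    rcases eq_or_lt_of_le hr.1 with he | hl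
    · rw [← he, h2 (1 + t) ⟨by linarith, le_rfl⟩]
      have hz : (1 + t - 1 - t : ℝ) = 0 := by ring
      have hz2 : (1 + t - 1 : ℝ) = t := by ring
      rw [hz, hz2, zero_smul, add_zero, hξt]
    · exact h3 r hl
  -- derivatives on open pieces
  have e1 : ∀ r ∈ Iio (1:ℝ), deriv η r = v1 := by
    intro r hr
    have hev : η =ᶠ[nhds r] fun u => y + u • v1 :=
      Filter.eventually_of_mem (Iio_mem_nhds hr) fun u hu => h1 u (le_of_lt hu)
    rw [hev.deriv_eq, affine_deriv]
  have ed1 : ∀ r ∈ Iio (1:ℝ), DifferentiableAt ℝ η r := by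
    intro r hr
    have hev : η =ᶠ[nhds r] fun u => y + u • v1 :=
      Filter.eventually_of_mem (Iio_mem_nhds hr) fun u hu => h1 u (le_of_lt hu)
    exact (affine_hasDerivAt y v1 r).differentiableAt.congr_of_eventuallyEq hev
  have e2 : ∀ r ∈ Ioo (1:ℝ) (1 + t), deriv η r = deriv ξ (r - 1) := by
    intro r hr
    have hev : η =ᶠ[nhds r] fun u => ξ (u - 1) :=
      Filter.eventually_of_mem (Ioo_mem_nhds hr.1 hr.2) fun u hu =>
        h2 u ⟨hu.1.le, hu.2.le⟩
    rw [hev.deriv_eq, deriv_comp_sub_const]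
  have ed2 : ∀ r ∈ Ioo (1:ℝ) (1 + t), r - 1 ∉ (F : Set ℝ) → DifferentiableAt ℝ η r := by
    intro r hr hF
    have hev : η =ᶠ[nhds r] fun u => ξ (u - 1) :=
      Filter.eventually_of_mem (Ioo_mem_nhds hr.1 hr.2) fun u hu =>
        h2 u ⟨hu.1.le, hu.2.le⟩
    have hd : DifferentiableAt ℝ ξ (r - 1) :=
      hdiff _ ⟨⟨by linarith [hr.1], by linarith [hr.2]⟩, hF⟩
    have : DifferentiableAt ℝ (fun u : ℝ => ξ (u - 1)) r :=
      hd.comp r ((differentiable_id.sub_const 1).differentiableAt)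
    exact this.congr_of_eventuallyEq hev
  have e3 : ∀ r ∈ Ioi (1 + t), deriv η r = v3 := by
    intro r hr
    have hev : η =ᶠ[nhds r] fun u => x' + (u - 1 - t) • v3 :=
      Filter.eventually_of_mem (Ioi_mem_nhds hr) fun u hu => h3 u hu
    rw [hev.deriv_eq]
    have : HasDerivAt (fun u : ℝ => x' + (u - 1 - t) • v3) v3 r := by
      simpa using ((((hasDerivAt_id r).sub_const 1).sub_const t).smul_const v3).const_add x'
    exact this.deriv
  have ed3 : ∀ r ∈ Ioi (1 + t), DifferentiableAt ℝ η r := by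
    intro r hr
    have hev : η =ᶠ[nhds r] fun u => x' + (u - 1 - t) • v3 :=
      Filter.eventually_of_mem (Ioi_mem_nhds hr) fun u hu => h3 u hu
    have : HasDerivAt (fun u : ℝ => x' + (u - 1 - t) • v3) v3 r := by
      simpa using ((((hasDerivAt_id r).sub_const 1).sub_const t).smul_const v3).const_add x'
    exact this.differentiableAt.congr_of_eventuallyEq hev
  -- break points
  set F' : Finset ℝ :=
    insert 0 (insert 1 (insert (1 + t) (insert (t + 2) (F.image (· + 1))))) with hF'
  have hsplit : ∀ r ∈ Icc (0:ℝ) (t + 2) \ (F' : Set ℝ),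
      r ∈ Ioo (0:ℝ) 1 ∨ r ∈ Ioo (1:ℝ) (1 + t) ∨ r ∈ Ioo (1 + t) (t + 2) := by
    intro r hr
    obtain ⟨⟨hr0, hr2⟩, hrF⟩ := hr
    simp only [hF', Finset.coe_insert, Set.mem_insert_iff, Finset.coe_image,
      Set.mem_image, Finset.mem_coe, not_or, not_exists] at hrF
    obtain ⟨hne0, hne1, hne1t, hnet2, _⟩ := hrF
    rcases lt_trichotomy r 1 with h | h | h
    · exact Or.inl ⟨lt_of_le_of_ne hr0 (Ne.symm hne0), h⟩
    · exact absurd h hne1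
    · rcases lt_trichotomy r (1 + t) with h' | h' | h'
      · exact Or.inr (Or.inl ⟨h, h'⟩)
      · exact absurd h' hne1t
      · exact Or.inr (Or.inr ⟨h', lt_of_le_of_ne hr2 hnet2⟩)
  have hnotF : ∀ r ∈ (Icc (0:ℝ) (t + 2) \ (F' : Set ℝ)), r - 1 ∉ (F : Set ℝ) := by
    intro r hr hmem
    apply hr.2
    simp only [hF', Finset.coe_insert, Set.mem_insert_iff, Finset.coe_image,
      Set.mem_image, Finset.mem_coe]
    exact Or.inr (Or.inr (Or.inr (Or.inr ⟨r - 1, hmem, by ring⟩)))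
  -- admissibility
  have hadm : IsAdmissiblePath η (t + 2) y x := by
    refine ⟨by linarith, ?_, ?_, ?_, F', ?_, ?_⟩
    · rw [h1 0 (by norm_num)]; simp
    · rw [h3 (t + 2) (by linarith)]
      have hz : (t + 2 - 1 - t : ℝ) = 1 := by ring
      rw [hz, one_smul, hv3]; abel
    · -- continuity
      have sub : Icc (0:ℝ) (t + 2) ⊆ Icc 0 1 ∪ Icc 1 (1 + t) ∪ Icc (1 + t) (t + 2) := by
        intro u hu
        rcases le_total u 1 with h | h
        · exact Or.inl (Or.inl ⟨hu.1, h⟩)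
        · rcases le_total u (1 + t) with h' | h'
          · exact Or.inl (Or.inr ⟨h, h'⟩)
          · exact Or.inr ⟨h', hu.2⟩
      intro r hr
      refine ContinuousWithinAt.mono ?_ sub
      refine (ContinuousWithinAt.union (ContinuousWithinAt.union ?_ ?_) ?_)
      · exact cwa_piece isClosed_Icc
          (continuous_const.add (continuous_id.smul continuous_const)).continuousOn
          (fun u hu => h1 u hu.2) r
      · refine cwa_piece isClosed_Icc ?_ (fun u hu => h2 u hu) r
        refine hcont.comp ((continuous_id.sub continuous_const).continuousOn) ?_
        intro u hu
        exact ⟨by simpa using hu.1, by simp only [id_eq]; linarith [hu.2]⟩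
      · exact cwa_piece isClosed_Icc
          (continuous_const.add (((continuous_id.sub continuous_const).sub
            continuous_const).smul continuous_const)).continuousOn
          (fun u hu => h3' u hu) r
    · intro r hr
      rcases hsplit r hr with h | h | h
      · exact ed1 r h.2
      · exact ed2 r h (hnotF r hr)
      · exact ed3 r h.1
    · -- continuity of deriv
      intro r hr
      set D := Icc (0:ℝ) (t + 2) \ (F' : Set ℝ) with hD
      rcases hsplit r hr with h | h | h
      · have hev : ∀ᶠ u in nhds r, deriv η u = v1 :=
          Filter.eventually_of_mem (Iio_mem_nhds h.2) fun u hu => e1 u hu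
        exact (continuousWithinAt_const (b := v1)).congr_of_eventuallyEq
          (hev.filter_mono nhdsWithin_le_nhds) (e1 r (Set.mem_Iio.mpr h.2))
      · -- middle
        have hmem : r - 1 ∈ Icc (0:ℝ) t \ (F : Set ℝ) :=
          ⟨⟨by linarith [h.1], by linarith [h.2]⟩, hnotF r hr⟩
        have base : ContinuousWithinAt (deriv ξ) (Icc (0:ℝ) t \ (F : Set ℝ)) (r - 1) :=
          hdcont _ hmem
        have comp : ContinuousWithinAt (fun u : ℝ => deriv ξ (u - 1))
            ((fun u : ℝ => u - 1) ⁻¹' (Icc (0:ℝ) t \ (F : Set ℝ))) r :=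
          ContinuousWithinAt.comp (g := deriv ξ) (f := fun u : ℝ => u - 1)
            (x := r) base ((continuous_id.sub continuous_const).continuousWithinAt)
            (mapsTo_preimage _ _)
        have hss : D ∩ Ioo 1 (1 + t) ⊆ (fun u : ℝ => u - 1) ⁻¹' (Icc (0:ℝ) t \ (F : Set ℝ)) := by
          intro u hu
          refine ⟨⟨?_, ?_⟩, hnotF u hu.1⟩
          · show (0:ℝ) ≤ u - 1
            linarith [hu.2.1]
          · show u - 1 ≤ t
            linarith [hu.2.2]
        have hmem' : (fun u : ℝ => u - 1) ⁻¹' (Icc (0:ℝ) t \ (F : Set ℝ)) ∈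
            nhdsWithin r D :=
          Filter.mem_of_superset (inter_mem_nhdsWithin D (Ioo_mem_nhds h.1 h.2)) hss
        have main : ContinuousWithinAt (fun u : ℝ => deriv ξ (u - 1)) D r :=
          comp.mono_of_mem_nhdsWithin hmem'
        have hev : ∀ᶠ u in nhds r, deriv η u = deriv ξ (u - 1) :=
          Filter.eventually_of_mem (Ioo_mem_nhds h.1 h.2) fun u hu => e2 u hu
        exact main.congr_of_eventuallyEq
          (hev.filter_mono nhdsWithin_le_nhds) (e2 r h)
      · have hev : ∀ᶠ u in nhds r, deriv η u = v3 :=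
          Filter.eventually_of_mem (Ioi_mem_nhds h.1) fun u hu => e3 u hu
        exact (continuousWithinAt_const (b := v3)).congr_of_eventuallyEq
          (hev.filter_mono nhdsWithin_le_nhds) (e3 r (Set.mem_Ioi.mpr h.1))
  refine ⟨η, t + 2, hadm, ?_⟩
  -- cost estimate
  set f : ℝ → ℝ := fun u => s (η u) (deriv η u) with hf
  set hfn : ℝ → ℝ := fun u => s (ξ u) (deriv ξ u) with hhfn
  set g1 : ℝ → ℝ := fun u => s (y + u • v1) v1 with hg1
  set g3 : ℝ → ℝ := fun u => s (x' + (u - 1 - t) • v3) v3 with hg3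
  have hcg1 : Continuous g1 :=
    hs.comp ((continuous_const.add (continuous_id.smul continuous_const)).prodMk
      continuous_const)
  have hcg3 : Continuous g3 :=
    hs.comp ((continuous_const.add (((continuous_id.sub continuous_const).sub
      continuous_const).smul continuous_const)).prodMk continuous_const)
  have feq1 : ∀ u ∈ Ioo (0:ℝ) 1, f u = g1 u := by
    intro u hu; rw [hf]; simp only
    rw [h1 u hu.2.le, e1 u hu.2]
  have feq2 : ∀ u ∈ Ioo (1:ℝ) (1 + t), f u = hfn (u - 1) := by
    intro u hu; rw [hf]; simp only
    rw [h2 u ⟨hu.1.le, hu.2.le⟩, e2 u hu]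
  have feq3 : ∀ u ∈ Ioo (1 + t) (t + 2), f u = g3 u := by
    intro u hu; rw [hf]; simp only
    rw [h3 u hu.1, e3 u hu.1]
  have hae1 : ∀ᵐ u : ℝ, u ∈ Ι (0:ℝ) 1 → f u = g1 u := ae_of_eqOn_Ioo zero_le_one feq1
  have hae2 : ∀ᵐ u : ℝ, u ∈ Ι (1:ℝ) (1 + t) → f u = (fun u => hfn (u - 1)) u :=
    ae_of_eqOn_Ioo (by linarith) feq2
  have hae3 : ∀ᵐ u : ℝ, u ∈ Ι (1 + t) (t + 2) → f u = g3 u :=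
    ae_of_eqOn_Ioo (by linarith) feq3
  have hres1 : f =ᵐ[volume.restrict (Ι (0:ℝ) 1)] g1 :=
    (ae_restrict_iff' measurableSet_uIoc).2 hae1
  have hres2 : f =ᵐ[volume.restrict (Ι (1:ℝ) (1 + t))] (fun u => hfn (u - 1)) :=
    (ae_restrict_iff' measurableSet_uIoc).2 hae2
  have hres3 : f =ᵐ[volume.restrict (Ι (1 + t) (t + 2))] g3 :=
    (ae_restrict_iff' measurableSet_uIoc).2 hae3
  have hPCη : pathCost s η (t + 2) = ∫ u in (0:ℝ)..(t + 2), f u := rfl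
  have hPCξ : pathCost s ξ t = ∫ u in (0:ℝ)..t, hfn u := rfl
  have hnv1 : ‖v1‖ = ‖y - y'‖ := norm_sub_rev _ _
  have hint1 : IntervalIntegrable f volume 0 1 :=
    (hcg1.intervalIntegrable 0 1).congr_ae hres1.symm
  have hint3 : IntervalIntegrable f volume (1 + t) (t + 2) :=
    (hcg3.intervalIntegrable _ _).congr_ae hres3.symm
  have heq1 : (∫ u in (0:ℝ)..1, f u) = ∫ u in (0:ℝ)..1, g1 u :=
    intervalIntegral.integral_congr_ae hae1
  have heq3 : (∫ u in (1 + t)..(t + 2), f u) = ∫ u in (1 + t)..(t + 2), g3 u :=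
    intervalIntegral.integral_congr_ae hae3
  have hb1 : (∫ u in (0:ℝ)..1, g1 u) ≤ c₂ * ‖v1‖ := by
    have h := intervalIntegral.integral_mono_on (μ := volume) (f := g1)
      (g := fun _ => c₂ * ‖v1‖) zero_le_one (hcg1.intervalIntegrable 0 1)
      intervalIntegrable_const (fun u _ => hub _ _)
    simpa using h
  have hb3 : (∫ u in (1 + t)..(t + 2), g3 u) ≤ c₂ * ‖v3‖ := by
    have h := intervalIntegral.integral_mono_on (μ := volume) (f := g3)
      (g := fun _ => c₂ * ‖v3‖) (by linarith : (1 + t : ℝ) ≤ t + 2)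
      (hcg3.intervalIntegrable _ _) intervalIntegrable_const (fun u _ => hub _ _)
    rw [intervalIntegral.integral_const] at h
    have h2 : (t + 2 - (1 + t) : ℝ) = 1 := by ring
    rwa [h2, one_smul] at h
  by_cases hint : IntervalIntegrable hfn volume 0 t
  · -- integrable case
    have hint2' : IntervalIntegrable (fun u => hfn (u - 1)) volume 1 (1 + t) := by
      have h := hint.comp_sub_right 1
      simpa [add_comm] using h
    have hint2 : IntervalIntegrable f volume 1 (1 + t) := hint2'.congr_ae hres2.symm
    have heq2 : (∫ u in (1:ℝ)..(1 + t), f u) = ∫ u in (1:ℝ)..(1 + t), hfn (u - 1) :=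
      intervalIntegral.integral_congr_ae hae2
    have hshift : (∫ u in (1:ℝ)..(1 + t), hfn (u - 1)) = ∫ u in (0:ℝ)..t, hfn u := by
      rw [intervalIntegral.integral_comp_sub_right hfn 1]
      norm_num
    have hsum : (∫ u in (0:ℝ)..(t + 2), f u) =
        (∫ u in (0:ℝ)..1, f u) + (∫ u in (1:ℝ)..(1 + t), f u) +
          (∫ u in (1 + t)..(t + 2), f u) := by
      rw [← intervalIntegral.integral_add_adjacent_intervals (hint1.trans hint2) hint3,
        ← intervalIntegral.integral_add_adjacent_intervals hint1 hint2]
    rw [hPCη, hPCξ, hsum, heq1, heq2, heq3, hshift, mul_add, ← hnv1]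
    have hnv3 : ‖v3‖ = ‖x - x'‖ := rfl
    rw [← hnv3]
    linarith
  · -- non-integrable case
    have hcost0 : pathCost s ξ t = 0 := by
      rw [hPCξ]; exact intervalIntegral.integral_undef hint
    have hnf2 : ¬ IntervalIntegrable f volume 1 (1 + t) := by
      intro hfI
      apply hint
      have h' : IntervalIntegrable (fun u => hfn (u - 1)) volume 1 (1 + t) :=
        hfI.congr_ae hres2
      have h2 := h'.comp_add_right 1
      simpa using h2
    have hnf : ¬ IntervalIntegrable f volume 0 (t + 2) := by
      intro hfI
      refine hnf2 (hfI.mono_set ?_)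
      rw [uIcc_of_le (by linarith : (1:ℝ) ≤ 1 + t), uIcc_of_le (by linarith : (0:ℝ) ≤ t + 2)]
      exact Icc_subset_Icc (by linarith) (by linarith)
    have hη0 : pathCost s η (t + 2) = 0 := by
      rw [hPCη]; exact intervalIntegral.integral_undef hnf
    rw [hη0, hcost0]
    have h1' : (0:ℝ) ≤ ‖y - y'‖ + ‖x - x'‖ := by positivity
    nlinarith

lemma Sdist_nonneg {s : E → E → ℝ} (hlb : ∀ x q : E, 0 ≤ s x q) (y x : E) :
    0 ≤ Sdist s y x := by
  refine Real.sInf_nonneg ?_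
  rintro c ⟨t, ξ, hadm, rfl⟩
  exact intervalIntegral.integral_nonneg hadm.1.le fun u _ => hlb _ _

lemma Sdist_key {s : E → E → ℝ}
    (hs : Continuous fun p : E × E => s p.1 p.2)
    {c₂ : ℝ} (hc₂ : 0 < c₂)
    (hub : ∀ x q : E, s x q ≤ c₂ * ‖q‖) (hlb : ∀ x q : E, 0 ≤ s x q)
    (y x y' x' : E) :
    Sdist s y x ≤ Sdist s y' x' + c₂ * (‖y - y'‖ + ‖x - x'‖) := by
  set S' := {c : ℝ | ∃ t : ℝ, ∃ ξ : ℝ → E,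
    IsAdmissiblePath ξ t y' x' ∧ c = pathCost s ξ t} with hS'
  have hne : S'.Nonempty :=
    ⟨pathCost s (fun r : ℝ => y' + r • (x' - y')) 1, 1, _, segment_admissible y' x', rfl⟩
  have hbdd : ∀ (y₀ x₀ : E), BddBelow {c : ℝ | ∃ t : ℝ, ∃ ξ : ℝ → E,
      IsAdmissiblePath ξ t y₀ x₀ ∧ c = pathCost s ξ t} := by
    intro y₀ x₀
    refine ⟨0, ?_⟩
    rintro c ⟨t, ξ, hadm, rfl⟩
    exact intervalIntegral.integral_nonneg hadm.1.le fun u _ => hlb _ _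
  refine le_of_forall_pos_le_add ?_
  intro ε hε
  obtain ⟨c, hcS, hclt⟩ :=
    exists_lt_of_csInf_lt hne (lt_add_of_pos_right (sInf S') hε)
  obtain ⟨tc, ξc, hadm, rfl⟩ := hcS
  obtain ⟨η, t', hadm', hcost⟩ := concat_cost hs hc₂ hub hlb hadm y x
  have hle : Sdist s y x ≤ pathCost s η t' :=
    csInf_le (hbdd y x) ⟨t', η, hadm', rfl⟩
  have : Sdist s y' x' = sInf S' := rfl
  rw [this]
  linarith

end helpers

/-- under the assumptions `c₁|q| ≤ s(x,q) ≤ c₂|q|`, `0 < c₁ ≤ c₂`, `s` continuous,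
the distance `S` is Lipschitz: `|S(y,x) − S(y',x')| ≤ c₂(|y − y'| + |x − x'|)`. -/
theorem Sdist_lipschitz {n : ℕ}
    (s : EuclideanSpace ℝ (Fin n) → EuclideanSpace ℝ (Fin n) → ℝ)
    (hs : Continuous fun p : EuclideanSpace ℝ (Fin n) × EuclideanSpace ℝ (Fin n) => s p.1 p.2)
    (c₁ c₂ : ℝ) (hc₁ : 0 < c₁) (hc₁₂ : c₁ ≤ c₂)
    (hbound : ∀ x q : EuclideanSpace ℝ (Fin n), c₁ * ‖q‖ ≤ s x q ∧ s x q ≤ c₂ * ‖q‖) :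
    ∀ x x' y y' : EuclideanSpace ℝ (Fin n),
      |Sdist s y x - Sdist s y' x'| ≤ c₂ * (‖y - y'‖ + ‖x - x'‖) := by
  have hc₂ : 0 < c₂ := lt_of_lt_of_le hc₁ hc₁₂
  have hub : ∀ x q : EuclideanSpace ℝ (Fin n), s x q ≤ c₂ * ‖q‖ := fun x q => (hbound x q).2
  have hlb : ∀ x q : EuclideanSpace ℝ (Fin n), 0 ≤ s x q := fun x q =>
    le_trans (by positivity) (hbound x q).1
  intro x x' y y'
  rw [abs_sub_le_iff]
  constructor
  · have h := Sdist_key hs hc₂ hub hlb y x y' x'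
    linarith
  · have h := Sdist_key hs hc₂ hub hlb y' x' y x
    rw [norm_sub_rev y' y, norm_sub_rev x' x] at h
    linarith
end

section
/- Let s : ℝⁿ × ℝⁿ → ℝ be continuous with c₁|q| ≤ s(x,q) ≤ c₂|q| for constants 0 < c₁ ≤ c₂, and let S(y,x) be the infimum of ∫₀ᵗ s(ξ(r), ξ'(r)) dr over piecewise continuously differentiable curves ξ : [0,t] → ℝⁿ joining y to x. Then S has the intermediate-point property: for all x, y ∈ ℝⁿ and all t, δ ≥ 0 with S(y,x) < t + δ, there exists z ∈ ℝⁿ such that S(z,x) ≤ t and S(y,z) ≤ δ. -/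
open Set MeasureTheory

section Aux

variable {n : ℕ} {s : EuclideanSpace ℝ (Fin n) → EuclideanSpace ℝ (Fin n) → ℝ}

/-- Under the nonnegativity of the running cost, the set of path costs is bounded below by 0. -/
lemma sdistSet_bddBelow (hpos : ∀ x q, 0 ≤ s x q) (y x : EuclideanSpace ℝ (Fin n)) :
    BddBelow {c : ℝ | ∃ t : ℝ, ∃ ξ : ℝ → EuclideanSpace ℝ (Fin n),
      IsAdmissiblePath ξ t y x ∧ c = pathCost s ξ t} := by
  refine ⟨0, ?_⟩
  rintro c ⟨t, ξ, ⟨ht, _⟩, rfl⟩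
  exact intervalIntegral.integral_nonneg ht.le (fun u _ => hpos _ _)

lemma Sdist_le_of_path (hpos : ∀ x q, 0 ≤ s x q) {y x : EuclideanSpace ℝ (Fin n)}
    {ξ : ℝ → EuclideanSpace ℝ (Fin n)} {t : ℝ} (h : IsAdmissiblePath ξ t y x) :
    Sdist s y x ≤ pathCost s ξ t :=
  csInf_le (sdistSet_bddBelow hpos y x) ⟨t, ξ, h, rfl⟩

/-- The straight-line path. -/
lemma isAdmissiblePath_line (y x : EuclideanSpace ℝ (Fin n)) :
    IsAdmissiblePath (fun r : ℝ => y + r • (x - y)) 1 y x := by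
  have hd : ∀ r : ℝ, HasDerivAt (fun r : ℝ => y + r • (x - y)) (x - y) r := by
    intro r
    have := ((hasDerivAt_id r).smul_const (x - y)).const_add y
    simpa using this
  refine ⟨one_pos, by simp, by simp, ?_, ∅, ?_, ?_⟩
  · exact (Continuous.continuousOn (by continuity))
  · intro r _; exact (hd r).differentiableAt
  · have : (deriv fun r : ℝ => y + r • (x - y)) = fun _ => x - y :=
      funext fun r => (hd r).deriv
    rw [this]; exact continuousOn_const

/-- `Sdist s z z ≤ 0` via the constant path, provided `s x 0 = 0`. -/
lemma Sdist_self_le (hpos : ∀ x q, 0 ≤ s x q) (hzero : ∀ x, s x 0 = 0)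
    (z : EuclideanSpace ℝ (Fin n)) : Sdist s z z ≤ 0 := by
  have hadm : IsAdmissiblePath (fun _ : ℝ => z) 1 z z := by
    refine ⟨one_pos, rfl, rfl, continuousOn_const, ∅, ?_, ?_⟩
    · intro r _; exact differentiableAt_const z
    · have : (deriv fun _ : ℝ => z) = fun _ => 0 := funext fun r => deriv_const r z
      rw [this]; exact continuousOn_const
  have hcost : pathCost s (fun _ : ℝ => z) 1 = 0 := by
    unfold pathCost
    have : (deriv fun _ : ℝ => z) = fun _ => (0 : EuclideanSpace ℝ (Fin n)) :=
      funext fun r => deriv_const r z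
    rw [this]
    simp [hzero z]
  calc Sdist s z z ≤ pathCost s (fun _ : ℝ => z) 1 := Sdist_le_of_path hpos hadm
    _ = 0 := hcost

end Aux

/-- under the assumptions `c₁|q| ≤ s(x,q) ≤ c₂|q|`, `0 < c₁ ≤ c₂`, `s` continuous,
the distance `S` has the intermediate-point property: if `S(y,x) < t + δ` with `t, δ ≥ 0`,
there exists `z` with `S(z,x) ≤ t` and `S(y,z) ≤ δ`. -/
theorem Sdist_intermediate_point {n : ℕ}
    (s : EuclideanSpace ℝ (Fin n) → EuclideanSpace ℝ (Fin n) → ℝ)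
    (hs : Continuous fun p : EuclideanSpace ℝ (Fin n) × EuclideanSpace ℝ (Fin n) => s p.1 p.2)
    (c₁ c₂ : ℝ) (hc₁ : 0 < c₁) (hc₁₂ : c₁ ≤ c₂)
    (hbound : ∀ x q : EuclideanSpace ℝ (Fin n), c₁ * ‖q‖ ≤ s x q ∧ s x q ≤ c₂ * ‖q‖) :
    ∀ x y : EuclideanSpace ℝ (Fin n), ∀ t δ : ℝ, 0 ≤ t → 0 ≤ δ →
      Sdist s y x < t + δ →
      ∃ z : EuclideanSpace ℝ (Fin n), Sdist s z x ≤ t ∧ Sdist s y z ≤ δ := by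
  -- basic facts about s
  have hpos : ∀ x q, 0 ≤ s x q := fun x q =>
    le_trans (by positivity) (hbound x q).1
  have hzero : ∀ x, s x 0 = 0 := by
    intro x
    have h1 := (hbound x 0).1
    have h2 := (hbound x 0).2
    simp only [norm_zero, mul_zero] at h1 h2
    linarith
  intro x y t δ ht hδ hlt
  -- extract a path of cost a < t + δ
  have hne : {c : ℝ | ∃ T : ℝ, ∃ ξ : ℝ → EuclideanSpace ℝ (Fin n),
      IsAdmissiblePath ξ T y x ∧ c = pathCost s ξ T}.Nonempty :=
    ⟨pathCost s (fun r : ℝ => y + r • (x - y)) 1, 1, _, isAdmissiblePath_line y x, rfl⟩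
  obtain ⟨a, ⟨T, ξ, hadm, rfl⟩, ha⟩ := exists_lt_of_csInf_lt hne hlt
  obtain ⟨hT, hξ0, hξT, hcont, F, hdiff, hcd⟩ := hadm
  set f : ℝ → ℝ := fun r => s (ξ r) (deriv ξ r) with hf
  set a : ℝ := pathCost s ξ T with hadef
  by_cases hat : a ≤ t
  · -- take z = y
    refine ⟨y, ?_, le_trans (Sdist_self_le hpos hzero y) hδ⟩
    calc Sdist s y x ≤ a := Sdist_le_of_path hpos ⟨hT, hξ0, hξT, hcont, F, hdiff, hcd⟩
      _ ≤ t := hat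
  · push_neg at hat
    have hapos : 0 < a := lt_of_le_of_lt ht hat
    -- f is integrable on [0, T]
    have hint : IntegrableOn f (Ioc 0 T) volume := by
      by_contra h
      have h0 : a = 0 := by
        have he : a = ∫ u in (0:ℝ)..T, f u := rfl
        rw [he, intervalIntegral.integral_of_le hT.le, MeasureTheory.integral_undef h]
      linarith
    have hII : IntervalIntegrable f volume 0 T :=
      (intervalIntegrable_iff_integrableOn_Ioc_of_le hT.le).mpr hint
    -- the partial cost function
    set g : ℝ → ℝ := fun r => ∫ u in (0:ℝ)..r, f u with hg
    have hgc : ContinuousOn g (Icc 0 T) := by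
      have := intervalIntegral.continuousOn_primitive_interval
        (f := f) (a := 0) (b := T) (μ := volume)
        (by rw [uIcc_of_le hT.le, integrableOn_Icc_iff_integrableOn_Ioc]; exact hint)
      rwa [uIcc_of_le hT.le] at this
    have hg0 : g 0 = 0 := by simp [hg]
    have hgT : g T = a := rfl
    -- intermediate value: find r* with g r* = a - t
    have hmem : a - t ∈ Icc (g 0) (g T) := by
      rw [hg0, hgT]; constructor <;> linarith
    obtain ⟨r, hrIcc, hgr⟩ := intermediate_value_Icc hT.le hgc hmem
    have hr0 : 0 < r := by
      rcases lt_or_eq_of_le hrIcc.1 with h | h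
      · exact h
      · exfalso; rw [← h] at hgr; rw [hg0] at hgr; linarith
    -- z = ξ r
    refine ⟨ξ r, ?_, ?_⟩
    · -- tail path from ξ r to x, cost = g T - g r = t
      rcases lt_or_eq_of_le hrIcc.2 with hrT | hrT
      · -- r < T : shift path
        set η : ℝ → EuclideanSpace ℝ (Fin n) := fun u => ξ (r + u) with hη
        have hderiv_η : deriv η = fun u => deriv ξ (r + u) :=
          funext fun u => deriv_comp_const_add ξ r u
        have hmaps : ∀ u ∈ Icc (0:ℝ) (T - r), r + u ∈ Icc (0:ℝ) T := by
          intro u hu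
          constructor
          · linarith [hu.1, hr0]
          · linarith [hu.2]
        have hadm' : IsAdmissiblePath η (T - r) (ξ r) x := by
          refine ⟨by linarith, by simp [hη], by simp [hη, hξT], ?_, F.image (fun v => v - r), ?_, ?_⟩
          · exact hcont.comp (by fun_prop) (fun u hu => hmaps u hu)
          · intro u hu
            have h1 : r + u ∈ Icc (0:ℝ) T \ (F : Set ℝ) := by
              refine ⟨hmaps u hu.1, fun hmem => hu.2 ?_⟩
              simp only [Finset.coe_image, Set.mem_image]
              exact ⟨r + u, hmem, by ring⟩
            exact (hdiff _ h1).comp u (by fun_prop)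
          · rw [hderiv_η]
            refine hcd.comp (by fun_prop) ?_
            intro u hu
            refine ⟨hmaps u hu.1, fun hmem => hu.2 ?_⟩
            simp only [Finset.coe_image, Set.mem_image]
            exact ⟨r + u, hmem, by ring⟩
        have hI1 : IntervalIntegrable f volume 0 r :=
          hII.mono_set (by rw [uIcc_of_le hr0.le, uIcc_of_le hT.le]; exact Icc_subset_Icc le_rfl hrIcc.2)
        have hI2 : IntervalIntegrable f volume r T :=
          hII.mono_set (by rw [uIcc_of_le hrT.le, uIcc_of_le hT.le]; exact Icc_subset_Icc hrIcc.1 le_rfl)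
        have hsplit : g r + ∫ u in r..T, f u = g T :=
          intervalIntegral.integral_add_adjacent_intervals hI1 hI2
        have hcost : pathCost s η (T - r) = t := by
          have h1 : pathCost s η (T - r) = ∫ u in (0:ℝ)..(T - r), f (r + u) :=
            intervalIntegral.integral_congr
              (fun u _ => by simp only [hderiv_η]; rfl)
          rw [h1, intervalIntegral.integral_comp_add_left f r, show r + (0:ℝ) = r by ring,
            show r + (T - r) = T by ring]
          have h2 : (∫ u in r..T, f u) = g T - g r := by linarith
          rw [h2, hgT, hgr]
          ring
        calc Sdist s (ξ r) x ≤ pathCost s η (T - r) := Sdist_le_of_path hpos hadm'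
          _ = t := hcost
      · -- r = T : ξ r = x, use constant path
        rw [hrT, hξT]
        exact le_trans (Sdist_self_le hpos hzero x) ht
    · -- head path from y to ξ r, cost = g r = a - t ≤ δ
      have hadm' : IsAdmissiblePath ξ r y (ξ r) :=
        ⟨hr0, hξ0, rfl, hcont.mono (Icc_subset_Icc le_rfl hrIcc.2), F,
          fun u hu => hdiff u ⟨Icc_subset_Icc le_rfl hrIcc.2 hu.1, hu.2⟩,
          hcd.mono (diff_subset_diff_left (Icc_subset_Icc le_rfl hrIcc.2))⟩
      have hcost : pathCost s ξ r = g r := rfl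
      calc Sdist s y (ξ r) ≤ pathCost s ξ r := Sdist_le_of_path hpos hadm'
        _ = a - t := by rw [hcost, hgr]
        _ ≤ δ := by linarith
end

section
/- Let (X,d) be a compact metric space and let S : X × X → [0,∞) satisfy: S(x,x) = 0 for all x; the triangle inequality S(x,z) ≤ S(x,y) + S(y,z); the comparability C·d(x,y) ≤ S(x,y) ≤ d(x,y)/C for some constant C ∈ (0,1]; and the intermediate-point property that whenever S(y,x) ≤ t + δ (t, δ ≥ 0) there exists z with S(z,x) ≤ t and S(y,z) ≤ δ. Let u₀ : X → ℝ be continuous. Then the Hopf–Lax function u(x,t) := inf{u₀(y) : y ∈ X, S(y,x) ≤ t} is well defined (the infimum is over a nonempty compact set and is attained) and u is continuous on X × [0,∞). -/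
/-- on a compact metric space `X` with a quasi-distance `S` (vanishing on the
diagonal, satisfying the triangle inequality, comparable to the metric `d`, with the
intermediate-point property) and a continuous initial datum `u₀`, the Hopf–Lax function
`u(x,t) = inf {u₀(y) : S(y,x) ≤ t}` is well defined (the infimum is over a nonempty compact
set and is attained) and continuous on `X × [0,∞)`. -/
theorem hopfLax_well_defined_and_continuous
    {X : Type*} [MetricSpace X] [CompactSpace X] [Nonempty X]
    (S : X → X → ℝ) (hS0 : ∀ x y : X, 0 ≤ S x y)
    (hSxx : ∀ x : X, S x x = 0)
    (htri : ∀ x y z : X, S x z ≤ S x y + S y z)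
    (C : ℝ) (hC0 : 0 < C) (hC1 : C ≤ 1)
    (hcomp : ∀ x y : X, C * dist x y ≤ S x y ∧ S x y ≤ dist x y / C)
    (hint : ∀ x y : X, ∀ t δ : ℝ, 0 ≤ t → 0 ≤ δ → S y x ≤ t + δ →
      ∃ z : X, S z x ≤ t ∧ S y z ≤ δ)
    (u₀ : X → ℝ) (hu₀ : Continuous u₀) :
    (∀ x : X, ∀ t : ℝ, 0 ≤ t →
      ({y : X | S y x ≤ t}).Nonempty ∧
      IsCompact {y : X | S y x ≤ t} ∧
      ∃ y : X, S y x ≤ t ∧ u₀ y = sInf (u₀ '' {y : X | S y x ≤ t}) ∧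
        ∀ z : X, S z x ≤ t → u₀ y ≤ u₀ z) ∧
    ContinuousOn (fun p : X × ℝ => sInf (u₀ '' {y : X | S y p.1 ≤ p.2}))
      (Set.univ ×ˢ Set.Ici (0 : ℝ)) := by
  have hbdd : ∀ s : Set X, BddBelow (u₀ '' s) := fun s =>
    BddBelow.mono (Set.image_subset_range u₀ s) (isCompact_range hu₀).bddBelow
  -- continuity of y ↦ S y x
  have hScont : ∀ x : X, Continuous fun y => S y x := by
    intro x
    rw [Metric.continuous_iff]
    intro y ε hε
    refine ⟨C * ε, by positivity, fun y' hy' => ?_⟩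
    rw [Real.dist_eq, abs_sub_lt_iff]
    have h1 : S y' x ≤ S y' y + S y x := htri y' y x
    have h2 : S y x ≤ S y y' + S y' x := htri y y' x
    have h3 : S y' y ≤ dist y' y / C := (hcomp y' y).2
    have h4 : S y y' ≤ dist y y' / C := (hcomp y y').2
    have hd : dist y y' = dist y' y := dist_comm y y'
    have h5 : dist y' y / C < ε := by
      rw [div_lt_iff₀ hC0, mul_comm]; exact hy'
    rw [hd] at h4
    constructor <;> linarith
  -- part 1
  have part1 : ∀ x : X, ∀ t : ℝ, 0 ≤ t →
      ({y : X | S y x ≤ t}).Nonempty ∧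
      IsCompact {y : X | S y x ≤ t} ∧
      ∃ y : X, S y x ≤ t ∧ u₀ y = sInf (u₀ '' {y : X | S y x ≤ t}) ∧
        ∀ z : X, S z x ≤ t → u₀ y ≤ u₀ z := by
    intro x t ht
    have hne : ({y : X | S y x ≤ t}).Nonempty := ⟨x, by simpa [hSxx x] using ht⟩
    have hclosed : IsClosed {y : X | S y x ≤ t} :=
      isClosed_le (hScont x) continuous_const
    have hcpt : IsCompact {y : X | S y x ≤ t} := hclosed.isCompact
    obtain ⟨y, hy, hmin⟩ := hcpt.exists_isMinOn hne hu₀.continuousOn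
    have hmin' : ∀ z : X, S z x ≤ t → u₀ y ≤ u₀ z := fun z hz =>
      isMinOn_iff.mp hmin z hz
    refine ⟨hne, hcpt, y, hy, ?_, hmin'⟩
    refine le_antisymm ?_ (csInf_le (hbdd _) ⟨y, hy, rfl⟩)
    refine le_csInf ⟨u₀ y, y, hy, rfl⟩ ?_
    rintro b ⟨z, hz, rfl⟩
    exact hmin' z hz
  refine ⟨part1, ?_⟩
  -- uniform continuity of u₀
  have hUC : UniformContinuous u₀ := CompactSpace.uniformContinuous_of_continuous hu₀
  rw [Metric.uniformContinuous_iff] at hUC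
  -- key estimate
  have key : ∀ ε η : ℝ, 0 < ε → 0 < η →
      (∀ a b : X, dist a b < η → dist (u₀ a) (u₀ b) < ε) →
      ∀ x x' : X, ∀ t t' : ℝ, 0 ≤ t → 0 ≤ t' →
      dist x x' / C + |t' - t| < C * η →
      sInf (u₀ '' {y : X | S y x ≤ t}) ≤ sInf (u₀ '' {y : X | S y x' ≤ t'}) + ε := by
    intro ε η hε hη hmod x x' t t' ht ht' hclose
    obtain ⟨-, -, y', hy', heq, -⟩ := part1 x' t' ht'
    set δ : ℝ := dist x x' / C + |t' - t| with hδdef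
    have hδ0 : 0 ≤ δ := by positivity
    have hSy'x : S y' x ≤ t + δ := by
      have h1 : S y' x ≤ S y' x' + S x' x := htri y' x' x
      have h2 : S x' x ≤ dist x' x / C := (hcomp x' x).2
      have h3 : t' ≤ t + |t' - t| := by
        cases abs_cases (t' - t) with
        | inl h => linarith [h.1]
        | inr h => linarith [h.1]
      have hd : dist x' x = dist x x' := dist_comm x' x
      rw [hd] at h2
      rw [hδdef]; linarith
    obtain ⟨z, hzx, hy'z⟩ := hint x y' t δ ht hδ0 hSy'x
    have hdyz : dist y' z < η := by
      have h1 : C * dist y' z ≤ S y' z := (hcomp y' z).1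
      have h2 : δ < C * η := hclose
      have := lt_of_le_of_lt (le_trans h1 hy'z) h2
      exact lt_of_mul_lt_mul_left this hC0.le
    have huz : u₀ z < u₀ y' + ε := by
      have := hmod y' z hdyz
      rw [dist_comm, Real.dist_eq, abs_sub_lt_iff] at this
      linarith [this.1]
    calc sInf (u₀ '' {y : X | S y x ≤ t}) ≤ u₀ z := csInf_le (hbdd _) ⟨z, hzx, rfl⟩
      _ ≤ u₀ y' + ε := huz.le
      _ = sInf (u₀ '' {y : X | S y x' ≤ t'}) + ε := by rw [heq]
  -- continuity
  rw [Metric.continuousOn_iff]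
  rintro ⟨x, t⟩ hp ε hε
  have ht : (0 : ℝ) ≤ t := (Set.mem_prod.mp hp).2
  obtain ⟨η, hη, hmod⟩ := hUC (ε / 2) (by linarith)
  refine ⟨C ^ 2 * η / 2, by positivity, ?_⟩
  rintro ⟨x', t'⟩ hq hdist
  have ht' : (0 : ℝ) ≤ t' := (Set.mem_prod.mp hq).2
  have hdx : dist x' x < C ^ 2 * η / 2 :=
    lt_of_le_of_lt (le_max_left _ _) hdist
  have hdt : |t' - t| < C ^ 2 * η / 2 := by
    have := lt_of_le_of_lt (le_max_right _ _) hdist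
    rwa [Real.dist_eq] at this
  have hC2 : C ^ 2 * η / 2 / C + C ^ 2 * η / 2 ≤ C * η := by
    have h1 : C ^ 2 * η / 2 / C = C * η / 2 := by
      field_simp
    have h2 : C ^ 2 * η ≤ C * η := by nlinarith [mul_nonneg (sub_nonneg.mpr hC1) (mul_pos hC0 hη).le]
    linarith
  have hdx' : dist x x' < C ^ 2 * η / 2 := by rw [dist_comm]; exact hdx
  have hclose1 : dist x x' / C + |t' - t| < C * η := by
    have h1 : dist x x' / C < C ^ 2 * η / 2 / C := by gcongr
    linarith
  have hclose2 : dist x' x / C + |t - t'| < C * η := by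
    have h1 : dist x' x / C < C ^ 2 * η / 2 / C := by gcongr
    have h2 : |t - t'| = |t' - t| := abs_sub_comm t t'
    linarith
  have k1 := key (ε / 2) η (by linarith) hη (fun a b h => hmod h) x' x t' t ht' ht hclose2
  have k2 := key (ε / 2) η (by linarith) hη (fun a b h => hmod h) x x' t t' ht ht' hclose1
  simp only [Real.dist_eq]
  rw [abs_sub_lt_iff]
  constructor <;> linarith
end

section
/- Let (X,d) be a compact metric space and f : X × X → ℝ upper semicontinuous. For each α > 0 let (x_α, y_α) be a maximum point of the function (x,y) ↦ f(x,y) − d(x,y)²/(2α) over X × X, and let M_α be the maximum value. Then, as α → 0⁺: (i) d(x_α, y_α)²/α → 0 (in particular d(x_α,y_α) → 0), and (ii) M_α → max_{x ∈ X} f(x,x). -/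
open Set Filter

/-- An upper semicontinuous real function on a compact space is bounded above. -/
private lemma usc_bddAbove {Y : Type*} [TopologicalSpace Y] [CompactSpace Y]
    (g : Y → ℝ) (hg : UpperSemicontinuous g) : BddAbove (Set.range g) := by
  obtain ⟨t, ht⟩ := isCompact_univ.elim_finite_subcover
    (fun n : ℕ => g ⁻¹' Set.Iio (n : ℝ)) (fun n => hg.isOpen_preimage _)
    (fun y _ => by
      obtain ⟨n, hn⟩ := exists_nat_gt (g y)
      exact Set.mem_iUnion.2 ⟨n, hn⟩)
  refine ⟨((t.sup id : ℕ) : ℝ), ?_⟩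
  rintro _ ⟨y, rfl⟩
  obtain ⟨n, hn, hy⟩ := Set.mem_iUnion₂.1 (ht (Set.mem_univ y))
  exact le_trans (le_of_lt hy) (Nat.cast_le.2 (Finset.le_sup (f := id) hn))

/-- An upper semicontinuous real function on a nonempty compact space attains its maximum. -/
private lemma usc_exists_max {Y : Type*} [TopologicalSpace Y] [CompactSpace Y] [Nonempty Y]
    (g : Y → ℝ) (hg : UpperSemicontinuous g) : ∃ y₀, ∀ y, g y ≤ g y₀ := by
  have hbdd := usc_bddAbove g hg
  have hne : (Set.range g).Nonempty := Set.range_nonempty g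
  set T := sSup (Set.range g) with hT
  set K : ℕ → Set Y := fun n => {y | T - 1/((n : ℝ)+1) ≤ g y} with hK
  have hKcl : ∀ n, IsClosed (K n) := by
    intro n
    have h : K n = (g ⁻¹' Set.Iio (T - 1/((n : ℝ)+1)))ᶜ := by
      ext y; simp [hK, not_lt]
    rw [h]
    exact (hg.isOpen_preimage _).isClosed_compl
  have hKne : ∀ n, (K n).Nonempty := by
    intro n
    have h1 : T - 1/((n:ℝ)+1) < T := sub_lt_self _ (by positivity)
    obtain ⟨_, ⟨y, rfl⟩, hy⟩ := exists_lt_of_lt_csSup hne h1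
    exact ⟨y, le_of_lt hy⟩
  have hsub : ∀ n, K (n+1) ⊆ K n := by
    intro n y hy
    simp only [hK, Set.mem_setOf_eq] at hy ⊢
    push_cast at hy
    have h1 : (1:ℝ)/((n:ℝ)+1+1) ≤ 1/((n:ℝ)+1) :=
      one_div_le_one_div_of_le (by positivity) (by linarith)
    linarith
  obtain ⟨y₀, hy₀⟩ := IsCompact.nonempty_iInter_of_sequence_nonempty_isCompact_isClosed
    K hsub hKne (hKcl 0).isCompact hKcl
  refine ⟨y₀, fun y => le_trans (le_csSup hbdd (Set.mem_range_self y)) ?_⟩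
  by_contra h
  push_neg at h
  obtain ⟨n, hn⟩ := exists_nat_one_div_lt (sub_pos.2 h)
  have h2 : y₀ ∈ K n := Set.mem_iInter.1 hy₀ n
  simp only [hK, Set.mem_setOf_eq] at h2
  linarith

/-- doubling-of-variables lemma: on a compact metric space `X`, let
`f : X × X → ℝ` be upper semicontinuous and, for each `α > 0`, let `(xa α, ya α)` be a
maximum point of `(x,y) ↦ f(x,y) − d(x,y)²/(2α)` with maximum value `M α`. Then,
as `α → 0⁺`: `d(xa α, ya α)²/α → 0` (in particular `d(xa α, ya α) → 0`) and
`M α → max_{x} f(x,x)`. -/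
theorem doubling_of_variables
    {X : Type*} [MetricSpace X] [CompactSpace X] [Nonempty X]
    (f : X × X → ℝ) (hf : UpperSemicontinuous f)
    (xa ya : ℝ → X)
    (hmax : ∀ α : ℝ, 0 < α → ∀ p : X × X,
      f p - dist p.1 p.2 ^ 2 / (2 * α) ≤
        f (xa α, ya α) - dist (xa α) (ya α) ^ 2 / (2 * α))
    (M : ℝ → ℝ)
    (hM : ∀ α : ℝ, 0 < α → M α = f (xa α, ya α) - dist (xa α) (ya α) ^ 2 / (2 * α)) :
    Filter.Tendsto (fun α : ℝ => dist (xa α) (ya α) ^ 2 / α)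
      (nhdsWithin 0 (Set.Ioi 0)) (nhds 0) ∧
    Filter.Tendsto (fun α : ℝ => dist (xa α) (ya α))
      (nhdsWithin 0 (Set.Ioi 0)) (nhds 0) ∧
    Filter.Tendsto M (nhdsWithin 0 (Set.Ioi 0))
      (nhds (sSup (Set.range fun x : X => f (x, x)))) := by
  -- the diagonal function is upper semicontinuous
  have hg : UpperSemicontinuous (fun x : X => f (x, x)) := by
    refine upperSemicontinuous_iff_isOpen_preimage.2 fun y => ?_
    exact (hf.isOpen_preimage y).preimage (continuous_id.prodMk continuous_id)
  obtain ⟨x₀, hx₀⟩ := usc_exists_max (fun x : X => f (x, x)) hg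
  obtain ⟨p₀, hp₀⟩ := usc_exists_max f hf
  set S : ℝ := f (x₀, x₀) with hS_def
  set C : ℝ := f p₀ with hC_def
  have hS_eq : sSup (Set.range fun x : X => f (x, x)) = S := by
    refine IsGreatest.csSup_eq ⟨Set.mem_range_self x₀, ?_⟩
    rintro _ ⟨x, rfl⟩
    exact hx₀ x
  have hCS : (0:ℝ) ≤ C - S := sub_nonneg.2 (hp₀ (x₀, x₀))
  -- S is a lower bound for M
  have hSM : ∀ α : ℝ, 0 < α → S ≤ f (xa α, ya α) - dist (xa α) (ya α) ^ 2 / (2 * α) := by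
    intro α hα
    have h := hmax α hα (x₀, x₀)
    simpa [dist_self] using h
  -- quadratic bound on the distance
  have hd2 : ∀ α : ℝ, 0 < α → dist (xa α) (ya α) ^ 2 ≤ 2 * (C - S) * α := by
    intro α hα
    have h1 := hSM α hα
    have h2 : f (xa α, ya α) ≤ C := hp₀ _
    have h3 : dist (xa α) (ya α) ^ 2 / (2 * α) ≤ C - S := by linarith
    have h4 : dist (xa α) (ya α) ^ 2 / (2 * α) * (2 * α) ≤ (C - S) * (2 * α) :=
      mul_le_mul_of_nonneg_right h3 (by positivity)
    rw [div_mul_cancel₀ _ (by positivity : (2 * α : ℝ) ≠ 0)] at h4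
    linarith
  -- uniform upper semicontinuity near the diagonal
  have key : ∀ ε : ℝ, 0 < ε → ∃ δ > 0, ∀ p : X × X, dist p.1 p.2 < δ → f p < S + ε := by
    intro ε hε
    set K := {p : X × X | S + ε ≤ f p} with hKdef
    have hKcl : IsClosed K := by
      have h : K = (f ⁻¹' Set.Iio (S + ε))ᶜ := by
        ext p; simp [hKdef, not_lt]
      rw [h]; exact (hf.isOpen_preimage _).isClosed_compl
    by_cases hKne : K.Nonempty
    · obtain ⟨q, hqK, hq⟩ := hKcl.isCompact.exists_isMinOn hKne
        (continuous_dist.comp (continuous_fst.prodMk continuous_snd)).continuousOn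
      have hq_pos : 0 < dist q.1 q.2 := by
        rcases (dist_nonneg : (0:ℝ) ≤ dist q.1 q.2).lt_or_eq with h | h
        · exact h
        · exfalso
          have hq12 : q.1 = q.2 := dist_eq_zero.1 h.symm
          have hfq : S + ε ≤ f q := hqK
          have : f q ≤ S := by
            have h2 := hx₀ q.1
            rwa [show (q.1, q.1) = q from Prod.ext rfl hq12] at h2
          linarith
      refine ⟨dist q.1 q.2, hq_pos, fun p hp => ?_⟩
      by_contra h
      push_neg at h
      have hpK : p ∈ K := h
      have := isMinOn_iff.1 hq p hpK
      simp only [Function.comp] at this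
      linarith
    · exact ⟨1, one_pos, fun p _ => by
        by_contra h
        push_neg at h
        exact hKne ⟨p, h⟩⟩
  -- eventually the distance is below any threshold
  have small : ∀ δ : ℝ, 0 < δ →
      ∀ᶠ α in nhdsWithin (0:ℝ) (Set.Ioi 0), 0 < α ∧ dist (xa α) (ya α) < δ := by
    intro δ hδ
    have hc : (0:ℝ) < 2 * (C - S) + 1 := by linarith
    have hr : (0:ℝ) < δ ^ 2 / (2 * (C - S) + 1) := by positivity
    filter_upwards [Ioo_mem_nhdsGT_of_mem ⟨le_rfl, hr⟩] with α hα
    refine ⟨hα.1, ?_⟩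
    have h1 := hd2 α hα.1
    have h2 := (lt_div_iff₀ hc).1 hα.2
    have h3 : 2 * (C - S) * α < δ ^ 2 := by nlinarith [hα.1]
    exact lt_of_pow_lt_pow_left₀ 2 hδ.le (by nlinarith)
  refine ⟨?_, ?_, ?_⟩
  · -- d²/α → 0
    rw [Metric.tendsto_nhds]
    intro ε hε
    obtain ⟨δ, hδ, hδf⟩ := key (ε/2) (by linarith)
    filter_upwards [small δ hδ] with α hα
    obtain ⟨hα0, hd⟩ := hα
    have hfa : f (xa α, ya α) < S + ε/2 := hδf (xa α, ya α) hd
    have hSa := hSM α hα0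
    have hdiv : dist (xa α) (ya α) ^ 2 / (2 * α) < ε/2 := by linarith
    have heq : dist (xa α) (ya α) ^ 2 / (2 * α) = dist (xa α) (ya α) ^ 2 / α / 2 := by
      ring
    rw [heq] at hdiv
    have h0 : 0 ≤ dist (xa α) (ya α) ^ 2 / α := by positivity
    rw [Real.dist_eq, sub_zero, abs_of_nonneg h0]
    linarith
  · -- d → 0
    rw [Metric.tendsto_nhds]
    intro ε hε
    filter_upwards [small ε hε] with α hα
    rw [Real.dist_eq, sub_zero, abs_of_nonneg dist_nonneg]
    exact hα.2
  · -- M → S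
    rw [hS_eq, Metric.tendsto_nhds]
    intro ε hε
    obtain ⟨δ, hδ, hδf⟩ := key ε hε
    filter_upwards [small δ hδ] with α hα
    obtain ⟨hα0, hd⟩ := hα
    have h1 : S ≤ M α := by rw [hM α hα0]; exact hSM α hα0
    have h2 : M α ≤ f (xa α, ya α) := by
      rw [hM α hα0]
      have : 0 ≤ dist (xa α) (ya α) ^ 2 / (2 * α) := by positivity
      linarith
    have h3 := hδf (xa α, ya α) hd
    rw [Real.dist_eq, abs_lt]
    constructor <;> linarith
end

section
/- Invariance under nondecreasing truncations (one-dimensional version). Let T > 0 and let H : ℝ × ℝ → ℝ be continuous and positively homogeneous in its second variable, i.e. H(x, λp) = λH(x,p) for all λ > 0, x, p. Let θ : ℝ → ℝ be continuous and nondecreasing. If u is an upper semicontinuous viscosity subsolution (respectively, a lower semicontinuous viscosity supersolution) of ∂_t u + H(x, ∂_x u) = 0 on ℝ × (0,T), then θ ∘ u is again a viscosity subsolution (respectively, supersolution) of the same equation on ℝ × (0,T). -/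
open Set Filter Topology

/-- `u` is a viscosity subsolution of `∂ₜ u + H(x, ∂ₓ u) = 0` on `ℝ × (0,T)`: for every `C¹`
test function `φ` and every point `(x,t)` with `t ∈ (0,T)` at which `u − φ` attains a local
maximum (relative to `ℝ × (0,T)`), one has `∂ₜ φ(x,t) + H(x, ∂ₓ φ(x,t)) ≤ 0`. -/
def EvolSubsol (T : ℝ) (H : ℝ → ℝ → ℝ) (u : ℝ → ℝ → ℝ) : Prop :=
  ∀ φ : ℝ → ℝ → ℝ, ContDiff ℝ 1 (fun p : ℝ × ℝ => φ p.1 p.2) →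
    ∀ x t : ℝ, t ∈ Ioo 0 T →
      IsLocalMaxOn (fun p : ℝ × ℝ => u p.1 p.2 - φ p.1 p.2)
        (univ ×ˢ Ioo 0 T) (x, t) →
      deriv (fun τ => φ x τ) t + H x (deriv (fun y => φ y t) x) ≤ 0

/-- `v` is a viscosity supersolution of `∂ₜ v + H(x, ∂ₓ v) = 0` on `ℝ × (0,T)`: for every `C¹`
test function `φ` and every point `(x,t)` with `t ∈ (0,T)` at which `v − φ` attains a local
minimum (relative to `ℝ × (0,T)`), one has `∂ₜ φ(x,t) + H(x, ∂ₓ φ(x,t)) ≥ 0`. -/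
def EvolSupersol (T : ℝ) (H : ℝ → ℝ → ℝ) (v : ℝ → ℝ → ℝ) : Prop :=
  ∀ φ : ℝ → ℝ → ℝ, ContDiff ℝ 1 (fun p : ℝ × ℝ => φ p.1 p.2) →
    ∀ x t : ℝ, t ∈ Ioo 0 T →
      IsLocalMinOn (fun p : ℝ × ℝ => v p.1 p.2 - φ p.1 p.2)
        (univ ×ˢ Ioo 0 T) (x, t) →
      0 ≤ deriv (fun τ => φ x τ) t + H x (deriv (fun y => φ y t) x)

/-- `w` is a viscosity subsolution of the stationary equation `H(x, w') = 1` on `Ω`. -/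
def StatSubsol (H : ℝ → ℝ → ℝ) (Ω : Set ℝ) (w : ℝ → ℝ) : Prop :=
  ∀ φ : ℝ → ℝ, ContDiff ℝ 1 φ → ∀ x ∈ Ω,
    IsLocalMaxOn (fun y => w y - φ y) Ω x → H x (deriv φ x) ≤ 1

/-- `w` is a viscosity supersolution of the stationary equation `H(x, w') = 1` on `Ω`. -/
def StatSupersol (H : ℝ → ℝ → ℝ) (Ω : Set ℝ) (w : ℝ → ℝ) : Prop :=
  ∀ φ : ℝ → ℝ, ContDiff ℝ 1 φ → ∀ x ∈ Ω,
    IsLocalMinOn (fun y => w y - φ y) Ω x → 1 ≤ H x (deriv φ x)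


/-- A function that is "upper semicontinuous in the neighborhood sense" on a compact set
attains its maximum there. -/
lemma exists_max_of_usc {α : Type*} [TopologicalSpace α] {K : Set α} (hK : IsCompact K)
    (hne : K.Nonempty) (F : α → ℝ)
    (h : ∀ z ∈ K, ∀ b, F z < b → {w | F w < b} ∈ 𝓝 z) :
    ∃ z ∈ K, ∀ w ∈ K, F w ≤ F z := by
  by_contra hcon
  push_neg at hcon
  have hU : ∀ z (hz : z ∈ K), {w | F w < F (hcon z hz).choose} ∈ 𝓝 z := fun z hz =>
    h z hz _ (hcon z hz).choose_spec.2
  obtain ⟨t, ht⟩ := hK.elim_nhds_subcover' (fun z hz => {w | F w < F (hcon z hz).choose}) hU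
  have htne : t.Nonempty := by
    rcases hne with ⟨z, hz⟩
    rcases Set.mem_iUnion₂.1 (ht hz) with ⟨i, hi, _⟩
    exact ⟨i, hi⟩
  obtain ⟨j, hjt, hj⟩ := t.exists_max_image (fun z => F (hcon z.1 z.2).choose) htne
  have hyK : (hcon j.1 j.2).choose ∈ K := (hcon j.1 j.2).choose_spec.1
  rcases Set.mem_iUnion₂.1 (ht hyK) with ⟨i, hit, hiy⟩
  exact absurd (lt_of_lt_of_le hiy (hj i hit)) (lt_irrefl _)

lemma sliceT_hasDerivAt {Ψ : ℝ × ℝ → ℝ} (hΨ : ContDiff ℝ 1 Ψ) (x t : ℝ) :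
    HasDerivAt (fun τ => Ψ (x, τ)) (fderiv ℝ Ψ (x, t) (0, 1)) t := by
  have h1 : HasDerivAt (fun τ : ℝ => ((x, τ) : ℝ × ℝ)) ((0 : ℝ), (1 : ℝ)) t :=
    (hasDerivAt_const t x).prodMk (hasDerivAt_id t)
  exact ((hΨ.differentiable one_ne_zero (x, t)).hasFDerivAt).comp_hasDerivAt t h1

lemma sliceX_hasDerivAt {Ψ : ℝ × ℝ → ℝ} (hΨ : ContDiff ℝ 1 Ψ) (x t : ℝ) :
    HasDerivAt (fun y => Ψ (y, t)) (fderiv ℝ Ψ (x, t) (1, 0)) x := by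
  have h1 : HasDerivAt (fun y : ℝ => ((y, t) : ℝ × ℝ)) ((1 : ℝ), (0 : ℝ)) x :=
    (hasDerivAt_id x).prodMk (hasDerivAt_const x t)
  exact ((hΨ.differentiable one_ne_zero (x, t)).hasFDerivAt).comp_hasDerivAt x h1

lemma cont_partial {Ψ : ℝ × ℝ → ℝ} (hΨ : ContDiff ℝ 1 Ψ) (v : ℝ × ℝ) :
    Continuous (fun z => fderiv ℝ Ψ z v) :=
  (hΨ.continuous_fderiv one_ne_zero).clm_apply continuous_const

noncomputable def smTheta (θ : ℝ → ℝ) (ε : ℝ) (s : ℝ) : ℝ :=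
  ε⁻¹ * ((∫ τ in (0:ℝ)..(s + ε), θ τ) - ∫ τ in (0:ℝ)..s, θ τ) + ε * s

noncomputable def smDeriv (θ : ℝ → ℝ) (ε : ℝ) (s : ℝ) : ℝ := ε⁻¹ * (θ (s + ε) - θ s) + ε

section smtheta
variable {θ : ℝ → ℝ} {ε : ℝ}

lemma smTheta_hasDerivAt (hθc : Continuous θ) (s : ℝ) :
    HasDerivAt (smTheta θ ε) (smDeriv θ ε s) s := by
  have hI : ∀ b : ℝ, HasDerivAt (fun r => ∫ τ in (0:ℝ)..r, θ τ) (θ b) b := fun b =>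
    intervalIntegral.integral_hasDerivAt_right (hθc.intervalIntegrable _ _)
      (hθc.stronglyMeasurableAtFilter _ _) hθc.continuousAt
  have h1 : HasDerivAt (fun s : ℝ => ∫ τ in (0:ℝ)..(s + ε), θ τ) (θ (s + ε)) s := by
    have := (hI (s + ε)).comp s ((hasDerivAt_id s).add_const ε)
    simpa [Function.comp_def] using this
  have h2 := ((h1.sub (hI s)).const_mul ε⁻¹).add ((hasDerivAt_id s).const_mul ε)
  show HasDerivAt (fun i => ε⁻¹ * ((∫ τ in (0:ℝ)..(i + ε), θ τ) - ∫ τ in (0:ℝ)..i, θ τ) + ε * i)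
    (smDeriv θ ε s) s
  simpa [smTheta, smDeriv, mul_comm, Pi.add_def] using h2

lemma smDeriv_pos (hθm : Monotone θ) (hε : 0 < ε) (s : ℝ) : 0 < smDeriv θ ε s := by
  have h1 : 0 ≤ ε⁻¹ * (θ (s + ε) - θ s) :=
    mul_nonneg (inv_pos.2 hε).le (sub_nonneg.2 (hθm (by linarith)))
  have := hε
  unfold smDeriv; linarith

lemma smDeriv_continuous (hθc : Continuous θ) : Continuous (smDeriv θ ε) := by
  unfold smDeriv
  exact (continuous_const.mul ((hθc.comp (continuous_add_right ε)).sub hθc)).add continuous_const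

lemma smTheta_strictMono (hθc : Continuous θ) (hθm : Monotone θ) (hε : 0 < ε) :
    StrictMono (smTheta θ ε) :=
  strictMono_of_hasDerivAt_pos (smTheta_hasDerivAt hθc) (smDeriv_pos hθm hε)

lemma smTheta_bounds (hθc : Continuous θ) (hθm : Monotone θ) (hε : 0 < ε) (s : ℝ) :
    θ s + ε * s ≤ smTheta θ ε s ∧ smTheta θ ε s ≤ θ (s + ε) + ε * s := by
  have key : (∫ τ in (0:ℝ)..(s + ε), θ τ) - ∫ τ in (0:ℝ)..s, θ τ = ∫ τ in s..(s + ε), θ τ := by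
    rw [← intervalIntegral.integral_add_adjacent_intervals (a := (0:ℝ)) (b := s) (c := s + ε)
      (hθc.intervalIntegrable _ _) (hθc.intervalIntegrable _ _)]
    ring
  have hle : s ≤ s + ε := by linarith
  have hlow : ε * θ s ≤ ∫ τ in s..(s + ε), θ τ := by
    have := intervalIntegral.integral_mono_on hle
      (intervalIntegrable_const (c := θ s) (μ := MeasureTheory.volume)) (hθc.intervalIntegrable _ _)
      (fun x hx => hθm hx.1)
    simpa using this
  have hhigh : (∫ τ in s..(s + ε), θ τ) ≤ ε * θ (s + ε) := by
    have := intervalIntegral.integral_mono_on hle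
      (hθc.intervalIntegrable _ _) (intervalIntegrable_const (c := θ (s + ε)) (μ := MeasureTheory.volume))
      (fun x hx => hθm hx.2)
    simpa using this
  have hεne : ε ≠ 0 := hε.ne'
  constructor
  · unfold smTheta
    rw [key]
    have : ε⁻¹ * (ε * θ s) ≤ ε⁻¹ * ∫ τ in s..(s + ε), θ τ :=
      mul_le_mul_of_nonneg_left hlow (inv_pos.2 hε).le
    rw [← mul_assoc, inv_mul_cancel₀ hεne, one_mul] at this
    linarith
  · unfold smTheta
    rw [key]
    have : ε⁻¹ * (∫ τ in s..(s + ε), θ τ) ≤ ε⁻¹ * (ε * θ (s + ε)) :=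
      mul_le_mul_of_nonneg_left hhigh (inv_pos.2 hε).le
    rw [← mul_assoc, inv_mul_cancel₀ hεne, one_mul] at this
    linarith

lemma smTheta_surjective (hθc : Continuous θ) (hθm : Monotone θ) (hε : 0 < ε) :
    Function.Surjective (smTheta θ ε) := by
  have hdiff : Differentiable ℝ (smTheta θ ε) := fun s =>
    (smTheta_hasDerivAt (ε := ε) hθc s).differentiableAt
  have hcont : Continuous (smTheta θ ε) := hdiff.continuous
  apply hcont.surjective
  · apply tendsto_atTop_mono' _ _ (tendsto_atTop_add_const_left _ (θ 0)
      (Tendsto.const_mul_atTop hε tendsto_id))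
    filter_upwards [eventually_ge_atTop (0:ℝ)] with s hs
    have h1 := (smTheta_bounds hθc hθm hε s).1
    have h2 : θ 0 ≤ θ s := hθm hs
    simp only [id] at *
    linarith
  · apply tendsto_atBot_mono' _ _ (tendsto_atBot_add_const_left _ (θ 0)
      (Tendsto.const_mul_atBot hε tendsto_id))
    filter_upwards [eventually_le_atBot (-ε)] with s hs
    have h1 := (smTheta_bounds hθc hθm hε s).2
    have h2 : θ (s + ε) ≤ θ 0 := hθm (by linarith)
    simp only [id] at *
    linarith

end smtheta

lemma hom_H_zero {H : ℝ → ℝ → ℝ}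
    (hHhom : ∀ x p : ℝ, ∀ l : ℝ, 0 < l → H x (l * p) = l * H x p) (x : ℝ) : H x 0 = 0 := by
  have := hHhom x 0 2 two_pos
  simp only [mul_zero] at this
  linarith

lemma evolSubsol_max_const {T : ℝ} {H : ℝ → ℝ → ℝ}
    (hH0 : ∀ x, H x 0 = 0) {u : ℝ → ℝ → ℝ} (hu : EvolSubsol T H u) (s₁ : ℝ) :
    EvolSubsol T H (fun x t => max (u x t) s₁) := by
  intro ψ hψ x t ht hmax
  have hmax' : ∀ᶠ p in 𝓝[univ ×ˢ Ioo 0 T] ((x, t) : ℝ × ℝ),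
      max (u p.1 p.2) s₁ - ψ p.1 p.2 ≤ max (u x t) s₁ - ψ x t := hmax
  rcases le_or_gt s₁ (u x t) with hcase | hcase
  · apply hu ψ hψ x t ht
    refine Filter.Eventually.mono hmax' fun p hp => ?_
    rw [max_eq_left hcase] at hp
    have : u p.1 p.2 ≤ max (u p.1 p.2) s₁ := le_max_left _ _
    dsimp only at hp ⊢
    linarith
  · -- the max is the constant s₁ near the point; the test function has a local min there
    have hxt : ((x, t) : ℝ × ℝ) ∈ (univ ×ˢ Ioo 0 T : Set (ℝ × ℝ)) := ⟨mem_univ _, ht⟩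
    have hopen : IsOpen (univ ×ˢ Ioo 0 T : Set (ℝ × ℝ)) := isOpen_univ.prod isOpen_Ioo
    have hnhds : 𝓝[(univ ×ˢ Ioo 0 T : Set (ℝ × ℝ))] ((x, t) : ℝ × ℝ) = 𝓝 ((x, t) : ℝ × ℝ) :=
      nhdsWithin_eq_nhds.2 (hopen.mem_nhds hxt)
    rw [hnhds] at hmax'
    have hψmin : ∀ᶠ p in 𝓝 ((x, t) : ℝ × ℝ), ψ x t ≤ ψ p.1 p.2 := by
      refine Filter.Eventually.mono hmax' fun p hp => ?_
      rw [max_eq_right hcase.le] at hp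
      have : s₁ ≤ max (u p.1 p.2) s₁ := le_max_right _ _
      linarith
    have hT : IsLocalMin (fun τ => ψ x τ) t := by
      have hc : Tendsto (fun τ : ℝ => ((x, τ) : ℝ × ℝ)) (𝓝 t) (𝓝 ((x, t) : ℝ × ℝ)) :=
        (Continuous.tendsto (continuous_const.prodMk continuous_id) t)
      exact hc.eventually hψmin
    have hX : IsLocalMin (fun y => ψ y t) x := by
      have hc : Tendsto (fun y : ℝ => ((y, t) : ℝ × ℝ)) (𝓝 x) (𝓝 ((x, t) : ℝ × ℝ)) :=
        (Continuous.tendsto (continuous_id.prodMk continuous_const) x)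
      exact hc.eventually hψmin
    rw [hT.deriv_eq_zero, hX.deriv_eq_zero, hH0 x]
    norm_num

lemma subsol_neg_of_supersol {T : ℝ} {H : ℝ → ℝ → ℝ} {w : ℝ → ℝ → ℝ}
    (h : EvolSupersol T H w) :
    EvolSubsol T (fun x p => -H x (-p)) (fun x t => -(w x t)) := by
  intro φ hφ x t ht hmax
  have hmin : IsLocalMinOn (fun p : ℝ × ℝ => w p.1 p.2 - (fun x t => -(φ x t)) p.1 p.2)
      (univ ×ˢ Ioo 0 T) (x, t) := by
    have hmax' : ∀ᶠ p in 𝓝[univ ×ˢ Ioo 0 T] ((x, t) : ℝ × ℝ),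
        -(w p.1 p.2) - φ p.1 p.2 ≤ -(w x t) - φ x t := hmax
    refine Filter.Eventually.mono hmax' fun p hp => ?_
    dsimp only at hp ⊢
    linarith
  have key := h (fun x t => -(φ x t)) (by exact hφ.neg) x t ht hmin
  have e1 : deriv (fun τ => -(φ x τ)) t = -deriv (fun τ => φ x τ) t := deriv.neg
  have e2 : deriv (fun y => -(φ y t)) x = -deriv (fun y => φ y t) x := deriv.neg
  rw [e1, e2] at key
  show deriv (fun τ => φ x τ) t + -H x (-(deriv (fun y => φ y t) x)) ≤ 0
  linarith

lemma supersol_of_neg_subsol {T : ℝ} {H : ℝ → ℝ → ℝ} {w : ℝ → ℝ → ℝ}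
    (h : EvolSubsol T (fun x p => -H x (-p)) (fun x t => -(w x t))) :
    EvolSupersol T H w := by
  intro φ hφ x t ht hmin
  have hmax : IsLocalMaxOn
      (fun p : ℝ × ℝ => (fun x t => -(w x t)) p.1 p.2 - (fun x t => -(φ x t)) p.1 p.2)
      (univ ×ˢ Ioo 0 T) (x, t) := by
    have hmin' : ∀ᶠ p in 𝓝[univ ×ˢ Ioo 0 T] ((x, t) : ℝ × ℝ),
        w x t - φ x t ≤ w p.1 p.2 - φ p.1 p.2 := hmin
    refine Filter.Eventually.mono hmin' fun p hp => ?_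
    dsimp only at hp ⊢
    linarith
  have key := h (fun x t => -(φ x t)) (by exact hφ.neg) x t ht hmax
  have e1 : deriv (fun τ => -(φ x τ)) t = -deriv (fun τ => φ x τ) t := deriv.neg
  have e2 : deriv (fun y => -(φ y t)) x = -deriv (fun y => φ y t) x := deriv.neg
  rw [e1, e2] at key
  simp only [neg_neg] at key
  linarith

lemma subsol_main (T : ℝ) (H : ℝ → ℝ → ℝ)
    (hHcont : Continuous fun p : ℝ × ℝ => H p.1 p.2)
    (hHhom : ∀ x p : ℝ, ∀ l : ℝ, 0 < l → H x (l * p) = l * H x p)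
    (θ : ℝ → ℝ) (hθc : Continuous θ) (hθm : Monotone θ)
    (u : ℝ → ℝ → ℝ)
    (husc : UpperSemicontinuousOn (fun p : ℝ × ℝ => u p.1 p.2) (univ ×ˢ Ioo 0 T))
    (hu : EvolSubsol T H u) : EvolSubsol T H (fun x t => θ (u x t)) := by
  intro φ hφ x₀ t₀ ht₀ hmax
  set Ω : Set (ℝ × ℝ) := univ ×ˢ Ioo 0 T with hΩdef
  have hΩopen : IsOpen Ω := isOpen_univ.prod isOpen_Ioo
  set z₀ : ℝ × ℝ := (x₀, t₀) with hz₀def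
  have hz₀Ω : z₀ ∈ Ω := ⟨mem_univ _, ht₀⟩
  set c : ℝ := u x₀ t₀ with hcdef
  have hH0 : ∀ x, H x 0 = 0 := hom_H_zero hHhom
  -- Step 1 : a closed ball inside Ω on which the max inequality holds
  have hmax' : ∀ᶠ p in 𝓝 z₀, p ∈ Ω ∧ θ (u p.1 p.2) - φ p.1 p.2 ≤ θ c - φ x₀ t₀ := by
    have h1 : ∀ᶠ p in 𝓝[Ω] z₀, θ (u p.1 p.2) - φ p.1 p.2 ≤ θ c - φ x₀ t₀ := hmax
    rw [nhdsWithin_eq_nhds.2 (hΩopen.mem_nhds hz₀Ω)] at h1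
    exact (h1.and (hΩopen.mem_nhds hz₀Ω)).mono fun p hp => ⟨hp.2, hp.1⟩
  obtain ⟨r', hr'pos, hr'⟩ := Metric.eventually_nhds_iff_ball.1 hmax'
  set r : ℝ := r' / 2 with hrdef
  have hrpos : 0 < r := by positivity
  have hball : ∀ p ∈ Metric.closedBall z₀ r,
      p ∈ Ω ∧ θ (u p.1 p.2) - φ p.1 p.2 ≤ θ c - φ x₀ t₀ :=
    fun p hp => hr' p (Metric.closedBall_subset_ball (by rw [hrdef]; linarith) hp)
  -- Step 2 : truncation level s₁ and a (possibly smaller) radius r₁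
  obtain ⟨s₁, hs₁c, r₁, hr₁pos, hr₁r, hvineq⟩ :
      ∃ s₁, s₁ ≤ c ∧ ∃ r₁, 0 < r₁ ∧ r₁ ≤ r ∧
        ∀ p ∈ Metric.closedBall z₀ r₁,
          θ (max (u p.1 p.2) s₁) ≤ θ c + (φ p.1 p.2 - φ x₀ t₀) := by
    by_cases hflat : ∀ s < c, θ s = θ c
    · refine ⟨c - 1, by linarith, r, hrpos, le_refl r, fun p hp => ?_⟩
      rcases le_or_gt (c - 1) (u p.1 p.2) with h | h
      · rw [max_eq_left h]
        have := (hball p hp).2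
        linarith
      · rw [max_eq_right h.le]
        have h1 : θ (c - 1) = θ c := hflat _ (by linarith)
        have h2 : θ (u p.1 p.2) = θ c := hflat _ (by linarith)
        have h3 := (hball p hp).2
        rw [h2] at h3
        linarith
    · push_neg at hflat
      obtain ⟨s₁, hs₁lt, hne⟩ := hflat
      have hθlt : θ s₁ < θ c := lt_of_le_of_ne (hθm hs₁lt.le) hne
      have hmem : ∀ᶠ p in 𝓝 z₀, φ x₀ t₀ - φ p.1 p.2 < θ c - θ s₁ := by
        have hcont2 : Continuous fun p : ℝ × ℝ => φ x₀ t₀ - φ p.1 p.2 :=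
          continuous_const.sub hφ.continuous
        have htend2 : Tendsto (fun p : ℝ × ℝ => φ x₀ t₀ - φ p.1 p.2) (𝓝 z₀)
            (𝓝 (φ x₀ t₀ - φ z₀.1 z₀.2)) := hcont2.continuousAt
        apply htend2.eventually_lt_const
        show φ x₀ t₀ - φ x₀ t₀ < θ c - θ s₁
        linarith
      obtain ⟨r'', hr''pos, hr''⟩ := Metric.eventually_nhds_iff_ball.1 hmem
      refine ⟨s₁, hs₁lt.le, min (r'' / 2) r, by positivity, min_le_right _ _, fun p hp => ?_⟩
      have hpball : p ∈ Metric.ball z₀ r'' :=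
        Metric.closedBall_subset_ball
          (lt_of_le_of_lt (min_le_left _ _) (by linarith)) hp
      have hpr : p ∈ Metric.closedBall z₀ r :=
        Metric.closedBall_subset_closedBall (min_le_right _ _) hp
      rcases le_or_gt s₁ (u p.1 p.2) with h | h
      · rw [max_eq_left h]
        have := (hball p hpr).2
        linarith
      · rw [max_eq_right h.le]
        have := hr'' p hpball
        linarith
  set K : Set (ℝ × ℝ) := Metric.closedBall z₀ r₁ with hKdef
  have hKΩ : K ⊆ Ω := fun p hp =>
    (hball p (Metric.closedBall_subset_closedBall hr₁r hp)).1
  have hKcomp : IsCompact K := isCompact_closedBall _ _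
  have hz₀K : z₀ ∈ K := Metric.mem_closedBall_self hr₁pos.le
  set V : ℝ × ℝ → ℝ := fun p => max (u p.1 p.2) s₁ with hVdef
  have hVz₀ : V z₀ = c := max_eq_left hs₁c
  have hv : EvolSubsol T H (fun x t => max (u x t) s₁) := evolSubsol_max_const hH0 hu s₁
  have husc_v : ∀ z ∈ K, ∀ b, V z < b → {w | V w < b} ∈ 𝓝 z := by
    intro z hz b hb
    have h1 : u z.1 z.2 < b := lt_of_le_of_lt (le_max_left _ _) hb
    have h2 : s₁ < b := lt_of_le_of_lt (le_max_right _ _) hb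
    have h3 := husc z (hKΩ hz) b h1
    rw [nhdsWithin_eq_nhds.2 (hΩopen.mem_nhds (hKΩ hz))] at h3
    exact h3.mono fun w hw => max_lt hw h2
  obtain ⟨zB, hzBK, hzB⟩ := exists_max_of_usc hKcomp ⟨z₀, hz₀K⟩ V husc_v
  set B : ℝ := V zB with hBdef
  have hcB : c ≤ B := hVz₀ ▸ hzB z₀ hz₀K
  -- the quartic penalization
  set Q : ℝ × ℝ → ℝ := fun p => ((p.1 - x₀) ^ 2 + (p.2 - t₀) ^ 2) ^ 2 with hQdef
  have hQcd : ContDiff ℝ 1 Q :=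
    (((contDiff_fst.sub contDiff_const).pow 2).add
      ((contDiff_snd.sub contDiff_const).pow 2)).pow 2
  have hQ0 : Q z₀ = 0 := by simp [hQdef, hz₀def]
  have hQnonneg : ∀ p, 0 ≤ Q p := fun p => by positivity
  have hQdist : ∀ p : ℝ × ℝ, dist p z₀ ^ 4 ≤ Q p := by
    intro p
    have h1 : dist p z₀ ^ 2 ≤ (p.1 - x₀) ^ 2 + (p.2 - t₀) ^ 2 := by
      rw [Prod.dist_eq]
      rcases le_total (dist p.1 z₀.1) (dist p.2 z₀.2) with h | h
      · rw [max_eq_right h]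
        have : dist p.2 z₀.2 = |p.2 - t₀| := by rw [Real.dist_eq, hz₀def]
        rw [this, sq_abs]
        nlinarith [sq_nonneg (p.1 - x₀)]
      · rw [max_eq_left h]
        have : dist p.1 z₀.1 = |p.1 - x₀| := by rw [Real.dist_eq, hz₀def]
        rw [this, sq_abs]
        nlinarith [sq_nonneg (p.2 - t₀)]
    calc dist p z₀ ^ 4 = (dist p z₀ ^ 2) ^ 2 := by ring
    _ ≤ ((p.1 - x₀) ^ 2 + (p.2 - t₀) ^ 2) ^ 2 := pow_le_pow_left₀ (by positivity) h1 2
  set φt : ℝ → ℝ → ℝ := fun x t => φ x t + ((x - x₀) ^ 2 + (t - t₀) ^ 2) ^ 2 with hφtdef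
  set Φt : ℝ × ℝ → ℝ := fun p => φt p.1 p.2 with hΦtdef
  have hΦtcd : ContDiff ℝ 1 Φt := hφ.add hQcd
  have hΦteq : ∀ p, Φt p = φ p.1 p.2 + Q p := fun p => rfl
  have hΦtz₀ : Φt z₀ = φ x₀ t₀ := by
    rw [hΦteq, hQ0, add_zero, hz₀def]
  set ε : ℕ → ℝ := fun n => 1 / (n + 1) with hεdef
  have hεpos : ∀ n, 0 < ε n := fun n => by positivity
  have hεto : Tendsto ε atTop (𝓝 0) := tendsto_one_div_add_atTop_nhds_zero_nat
  set F : ℕ → ℝ × ℝ → ℝ := fun n p => smTheta θ (ε n) (V p) - Φt p with hFdef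
  have husc_F : ∀ n, ∀ z ∈ K, ∀ b, F n z < b → {w | F n w < b} ∈ 𝓝 z := by
    intro n z hz b hb
    have hΘdiff : Differentiable ℝ (smTheta θ (ε n)) := fun s =>
      (smTheta_hasDerivAt hθc s).differentiableAt
    have hΘc : Continuous (smTheta θ (ε n)) := hΘdiff.continuous
    have hΘm : Monotone (smTheta θ (ε n)) := (smTheta_strictMono hθc hθm (hεpos n)).monotone
    obtain ⟨b₁, hb₁, hb₁'⟩ := exists_between hb
    have hopen : {s : ℝ | smTheta θ (ε n) s < b₁ + Φt z} ∈ 𝓝 (V z) := by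
      apply (isOpen_Iio.preimage hΘc).mem_nhds
      show smTheta θ (ε n) (V z) < b₁ + Φt z
      have he : F n z = smTheta θ (ε n) (V z) - Φt z := rfl
      rw [he] at hb₁
      linarith
    obtain ⟨δ, hδpos, hδ⟩ := Metric.mem_nhds_iff.1 hopen
    have hs' : ∀ s < V z + δ / 2, smTheta θ (ε n) s < b₁ + Φt z := by
      intro s hs
      rcases le_or_gt s (V z) with h | h
      · exact lt_of_le_of_lt (hΘm h) (hδ (Metric.mem_ball_self hδpos))
      · apply hδ
        rw [Metric.mem_ball, Real.dist_eq, abs_lt]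
        constructor <;> linarith
    have h2 : {w | V w < V z + δ / 2} ∈ 𝓝 z := husc_v z hz _ (by linarith)
    have h3 : {w : ℝ × ℝ | Φt z - (b - b₁) < Φt w} ∈ 𝓝 z := by
      apply (isOpen_Ioi.preimage hΦtcd.continuous).mem_nhds
      show Φt z - (b - b₁) < Φt z
      linarith
    filter_upwards [h2, h3] with w hw2 hw3
    have h4 := hs' (V w) hw2
    show F n w < b
    have he : F n w = smTheta θ (ε n) (V w) - Φt w := rfl
    rw [he]
    linarith
  have hzn : ∀ n, ∃ z ∈ K, ∀ w ∈ K, F n w ≤ F n z := fun n =>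
    exists_max_of_usc hKcomp ⟨z₀, hz₀K⟩ (F n) (husc_F n)
  choose zn hznK hznmax using hzn
  -- the maximum points converge to z₀
  have htend : Tendsto zn atTop (𝓝 z₀) := by
    rw [Metric.tendsto_atTop]
    intro δ hδpos
    have hUC := (isCompact_Icc (a := s₁) (b := B + 1)).uniformContinuousOn_of_continuous
      hθc.continuousOn
    rw [Metric.uniformContinuousOn_iff] at hUC
    have hη : 0 < δ ^ 4 / 2 := by positivity
    obtain ⟨d, hdpos, hd⟩ := hUC (δ ^ 4 / 2) hη
    have hev1 : ∀ᶠ n in atTop, ε n < min d 1 :=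
      hεto.eventually_lt_const (by positivity)
    have hev2 : ∀ᶠ n in atTop, ε n * (|B| + |c|) < δ ^ 4 / 2 := by
      have h5 : Tendsto (fun n => ε n * (|B| + |c|)) atTop (𝓝 (0 * (|B| + |c|))) :=
        hεto.mul_const _
      rw [zero_mul] at h5
      exact h5.eventually_lt_const hη
    obtain ⟨N, hN⟩ := eventually_atTop.1 (hev1.and hev2)
    refine ⟨N, fun n hn => ?_⟩
    obtain ⟨h1, h2⟩ := hN n hn
    have hεn1 : ε n < 1 := lt_of_lt_of_le h1 (min_le_right _ _)
    have hεnd : ε n < d := lt_of_lt_of_le h1 (min_le_left _ _)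
    by_contra hcon
    push_neg at hcon
    -- lower bound for the maximum value
    have hFz₀ : F n z₀ = smTheta θ (ε n) c - φ x₀ t₀ := by
      have he : F n z₀ = smTheta θ (ε n) (V z₀) - Φt z₀ := rfl
      rw [he, hVz₀, hΦtz₀]
    have hlow : θ c + ε n * c - φ x₀ t₀ ≤ F n (zn n) := by
      have hb := (smTheta_bounds hθc hθm (hεpos n) c).1
      have h6 := hznmax n z₀ hz₀K
      rw [hFz₀] at h6
      linarith
    -- upper bound for the maximum value
    have hKn := hznK n
    have hVn1 : s₁ ≤ V (zn n) := le_max_right _ _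
    have hVn2 : V (zn n) ≤ B := hzB (zn n) hKn
    have hup1 := (smTheta_bounds hθc hθm (hεpos n) (V (zn n))).2
    have hup2 : θ (V (zn n) + ε n) - θ (V (zn n)) < δ ^ 4 / 2 := by
      have hmem0 : V (zn n) ∈ Icc s₁ (B + 1) := ⟨hVn1, by linarith⟩
      have hmem1 : V (zn n) + ε n ∈ Icc s₁ (B + 1) :=
        ⟨by linarith [(hεpos n).le], by linarith⟩
      have hdist : dist (V (zn n) + ε n) (V (zn n)) < d := by
        rw [Real.dist_eq]
        have he : V (zn n) + ε n - V (zn n) = ε n := by ring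
        rw [he, abs_of_pos (hεpos n)]
        exact hεnd
      have := hd _ hmem1 _ hmem0 hdist
      rw [Real.dist_eq] at this
      have habs := (abs_lt.1 this).2
      linarith
    have hup3 : ε n * V (zn n) ≤ ε n * |B| :=
      mul_le_mul_of_nonneg_left (le_trans hVn2 (le_abs_self B)) (hεpos n).le
    have hθV : θ (V (zn n)) ≤ θ c + (φ (zn n).1 (zn n).2 - φ x₀ t₀) := hvineq (zn n) hKn
    have hQn : δ ^ 4 ≤ Q (zn n) :=
      le_trans (pow_le_pow_left₀ hδpos.le hcon 4) (hQdist (zn n))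
    have hupall : F n (zn n) ≤ θ c + δ ^ 4 / 2 + ε n * |B| - φ x₀ t₀ - δ ^ 4 := by
      have he : F n (zn n) = smTheta θ (ε n) (V (zn n)) - φ (zn n).1 (zn n).2 - Q (zn n) := by
        have h7 : F n (zn n) = smTheta θ (ε n) (V (zn n)) - Φt (zn n) := rfl
        rw [h7, hΦteq]
        ring
      rw [he]
      linarith
    have hcε : -(ε n * |c|) ≤ ε n * c := by
      have := mul_le_mul_of_nonneg_left (neg_abs_le c) (hεpos n).le
      linarith
    have hsplit : ε n * (|B| + |c|) = ε n * |B| + ε n * |c| := by ring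
    have hδ4 : 0 < δ ^ 4 := by positivity
    have hcomb := le_trans hlow hupall
    linarith [hcomb, hcε, h2, hsplit, hδ4]
  -- eventually the maximum points are interior and satisfy the viscosity inequality
  set G : ℝ × ℝ → ℝ := fun z => fderiv ℝ Φt z (0, 1) + H z.1 (fderiv ℝ Φt z (1, 0)) with hGdef
  have hev_int : ∀ᶠ n in atTop, zn n ∈ Metric.ball z₀ r₁ :=
    htend (Metric.isOpen_ball.mem_nhds (Metric.mem_ball_self hr₁pos))
  have hineq : ∀ᶠ n in atTop, G (zn n) ≤ 0 := by
    filter_upwards [hev_int] with n hn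
    have hεnpos : 0 < ε n := hεpos n
    have hmono := smTheta_strictMono hθc hθm hεnpos
    have hsurj := smTheta_surjective hθc hθm hεnpos
    set E := StrictMono.orderIsoOfSurjective _ hmono hsurj with hEdef
    set g : ℝ → ℝ := ⇑E.symm with hgdef
    have hgθ : ∀ s, g (smTheta θ (ε n) s) = s := fun s => E.symm_apply_apply s
    have hθg : ∀ y, smTheta θ (ε n) (g y) = y := fun y => E.apply_symm_apply y
    have hgcont : Continuous g := OrderIso.continuous E.symm
    have hgmono : Monotone g := E.symm.monotone
    have hgderiv : ∀ y, HasDerivAt g (smDeriv θ (ε n) (g y))⁻¹ y := fun y =>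
      HasDerivAt.of_local_left_inverse hgcont.continuousAt
        (smTheta_hasDerivAt hθc (g y)) (smDeriv_pos hθm hεnpos _).ne'
        (Eventually.of_forall hθg)
    have hgC : ContDiff ℝ 1 g := by
      rw [contDiff_one_iff_deriv]
      refine ⟨fun y => (hgderiv y).differentiableAt, ?_⟩
      have he : deriv g = fun y => (smDeriv θ (ε n) (g y))⁻¹ := funext fun y => (hgderiv y).deriv
      rw [he]
      exact ((smDeriv_continuous hθc).comp hgcont).inv₀
        fun y => (smDeriv_pos hθm hεnpos _).ne'
    set Cn : ℝ := smTheta θ (ε n) (V (zn n)) - Φt (zn n) with hCndef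
    set ψ : ℝ → ℝ → ℝ := fun x t => g (φt x t + Cn) with hψdef
    have hψC : ContDiff ℝ 1 (fun p : ℝ × ℝ => ψ p.1 p.2) :=
      hgC.comp (hΦtcd.add contDiff_const)
    have hznΩ : zn n ∈ Ω := hKΩ (hznK n)
    have htn : (zn n).2 ∈ Ioo 0 T := hznΩ.2
    have hψzn : ψ (zn n).1 (zn n).2 = V (zn n) := by
      have he : φt (zn n).1 (zn n).2 + Cn = smTheta θ (ε n) (V (zn n)) := by
        have h8 : φt (zn n).1 (zn n).2 = Φt (zn n) := rfl
        rw [h8, hCndef]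
        ring
      show g (φt (zn n).1 (zn n).2 + Cn) = V (zn n)
      rw [he, hgθ]
    have hmaxn : IsLocalMaxOn
        (fun p : ℝ × ℝ => max (u p.1 p.2) s₁ - ψ p.1 p.2) Ω ((zn n).1, (zn n).2) := by
      have hKnh : K ∈ 𝓝[Ω] ((zn n).1, (zn n).2) := by
        apply nhdsWithin_le_nhds
        exact mem_of_superset (Metric.isOpen_ball.mem_nhds hn) Metric.ball_subset_closedBall
      refine Filter.eventually_of_mem hKnh fun w hw => ?_
      have hFw : F n w ≤ F n (zn n) := hznmax n w hw
      have h1 : smTheta θ (ε n) (V w) ≤ Φt w + Cn := by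
        have he1 : F n w = smTheta θ (ε n) (V w) - Φt w := rfl
        have he2 : F n (zn n) = smTheta θ (ε n) (V (zn n)) - Φt (zn n) := rfl
        rw [he1, he2] at hFw
        rw [hCndef]
        linarith
      have h2 : V w ≤ ψ w.1 w.2 := by
        have h9 := hgmono h1
        rw [hgθ] at h9
        exact h9
      show max (u w.1 w.2) s₁ - ψ w.1 w.2 ≤ max (u (zn n).1 (zn n).2) s₁ - ψ (zn n).1 (zn n).2
      rw [hψzn]
      have he3 : V w = max (u w.1 w.2) s₁ := rfl
      have he4 : V (zn n) = max (u (zn n).1 (zn n).2) s₁ := rfl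
      rw [← he3, ← he4]
      linarith
    have key := hv ψ hψC (zn n).1 (zn n).2 htn hmaxn
    set yn : ℝ := φt (zn n).1 (zn n).2 + Cn with hyndef
    have hgyn : g yn = V (zn n) := by
      have he : yn = smTheta θ (ε n) (V (zn n)) := by
        have h8 : φt (zn n).1 (zn n).2 = Φt (zn n) := rfl
        rw [hyndef, h8, hCndef]
        ring
      rw [he, hgθ]
    set lamn : ℝ := smDeriv θ (ε n) (V (zn n)) with hlamndef
    have hlamnpos : 0 < lamn := smDeriv_pos hθm hεnpos _
    set An : ℝ := fderiv ℝ Φt ((zn n).1, (zn n).2) (0, 1) with hAndef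
    set Pn : ℝ := fderiv ℝ Φt ((zn n).1, (zn n).2) (1, 0) with hPndef
    have hdT : HasDerivAt (fun τ => ψ (zn n).1 τ) (lamn⁻¹ * An) (zn n).2 := by
      have hsl := (sliceT_hasDerivAt hΦtcd (zn n).1 (zn n).2).add_const Cn
      have hcomp := (hgderiv yn).comp (zn n).2 hsl
      rw [hgyn] at hcomp
      exact hcomp
    have hdX : HasDerivAt (fun y => ψ y (zn n).2) (lamn⁻¹ * Pn) (zn n).1 := by
      have hsl := (sliceX_hasDerivAt hΦtcd (zn n).1 (zn n).2).add_const Cn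
      have hcomp := (hgderiv yn).comp (zn n).1 hsl
      rw [hgyn] at hcomp
      exact hcomp
    rw [hdT.deriv, hdX.deriv] at key
    rw [hHhom (zn n).1 Pn lamn⁻¹ (inv_pos.2 hlamnpos)] at key
    have h5 : lamn⁻¹ * (An + H (zn n).1 Pn) ≤ lamn⁻¹ * 0 := by
      rw [mul_zero, mul_add]
      linarith
    have h6 : An + H (zn n).1 Pn ≤ 0 := le_of_mul_le_mul_left h5 (inv_pos.2 hlamnpos)
    exact h6
  have hGcont : Continuous G := by
    apply Continuous.add (cont_partial hΦtcd _)
    exact hHcont.comp (continuous_fst.prodMk (cont_partial hΦtcd _))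
  have htendG : Tendsto (fun n => G (zn n)) atTop (𝓝 (G z₀)) :=
    (hGcont.tendsto z₀).comp htend
  have hG0 : G z₀ ≤ 0 := le_of_tendsto htendG hineq
  have hΦdiff : DifferentiableAt ℝ (fun p : ℝ × ℝ => φ p.1 p.2) z₀ :=
    (hφ.differentiable one_ne_zero) z₀
  have hQdiff : DifferentiableAt ℝ Q z₀ := (hQcd.differentiable one_ne_zero) z₀
  have hQmin : IsLocalMin Q z₀ :=
    Filter.Eventually.of_forall fun p => by rw [hQ0]; exact hQnonneg p
  have hQf : fderiv ℝ Q z₀ = 0 := hQmin.fderiv_eq_zero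
  have hfd : fderiv ℝ Φt z₀ =
      fderiv ℝ (fun p : ℝ × ℝ => φ p.1 p.2) z₀ + fderiv ℝ Q z₀ :=
    fderiv_add hΦdiff hQdiff
  have hA0 : fderiv ℝ Φt z₀ (0, 1) = deriv (fun τ => φ x₀ τ) t₀ := by
    rw [hfd, hQf]
    simp only [ContinuousLinearMap.add_apply, ContinuousLinearMap.zero_apply, add_zero]
    exact ((sliceT_hasDerivAt hφ x₀ t₀).deriv).symm
  have hP0 : fderiv ℝ Φt z₀ (1, 0) = deriv (fun y => φ y t₀) x₀ := by
    rw [hfd, hQf]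
    simp only [ContinuousLinearMap.add_apply, ContinuousLinearMap.zero_apply, add_zero]
    exact ((sliceX_hasDerivAt hφ x₀ t₀).deriv).symm
  have hGz₀ : G z₀ = deriv (fun τ => φ x₀ τ) t₀ + H x₀ (deriv (fun y => φ y t₀) x₀) := by
    have he : G z₀ = fderiv ℝ Φt z₀ (0, 1) + H z₀.1 (fderiv ℝ Φt z₀ (1, 0)) := rfl
    rw [he, hA0, hP0]
  rw [← hGz₀]
  exact hG0

theorem truncation_invariance'
    (T : ℝ) (hT : 0 < T) (H : ℝ → ℝ → ℝ)
    (hHcont : Continuous fun p : ℝ × ℝ => H p.1 p.2)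
    (hHhom : ∀ x p : ℝ, ∀ l : ℝ, 0 < l → H x (l * p) = l * H x p)
    (θ : ℝ → ℝ) (hθcont : Continuous θ) (hθmono : Monotone θ)
    (u : ℝ → ℝ → ℝ) :
    (UpperSemicontinuousOn (fun p : ℝ × ℝ => u p.1 p.2) (univ ×ˢ Ioo 0 T) →
      EvolSubsol T H u → EvolSubsol T H (fun x t => θ (u x t))) ∧
    (LowerSemicontinuousOn (fun p : ℝ × ℝ => u p.1 p.2) (univ ×ˢ Ioo 0 T) →
      EvolSupersol T H u → EvolSupersol T H (fun x t => θ (u x t))) := by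
  constructor
  · intro husc hsub
    exact subsol_main T H hHcont hHhom θ hθcont hθmono u husc hsub
  · intro hlsc hsup
    have hH'cont : Continuous fun p : ℝ × ℝ => -H p.1 (-p.2) :=
      (hHcont.comp (continuous_fst.prodMk continuous_snd.neg)).neg
    have hH'hom : ∀ x p : ℝ, ∀ l : ℝ, 0 < l →
        (fun x p => -H x (-p)) x (l * p) = l * (fun x p => -H x (-p)) x p := by
      intro x p l hl
      show -H x (-(l * p)) = l * -H x (-p)
      rw [show -(l * p) = l * (-p) by ring, hHhom x (-p) l hl]
      ring
    have hθ'cont : Continuous fun s => -θ (-s) := (hθcont.comp continuous_neg).neg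
    have hθ'mono : Monotone fun s => -θ (-s) := by
      intro a b hab
      simp only [neg_le_neg_iff]
      exact hθmono (by linarith)
    have husc' : UpperSemicontinuousOn (fun p : ℝ × ℝ => -(u p.1 p.2)) (univ ×ˢ Ioo 0 T) := by
      intro z hz y hy
      have hy' : -(u z.1 z.2) < y := hy
      have h2 := hlsc z hz (-y) (by linarith)
      exact h2.mono fun w hw => show -(u w.1 w.2) < y by linarith
    have hsub' : EvolSubsol T (fun x p => -H x (-p)) (fun x t => -(u x t)) :=
      subsol_neg_of_supersol hsup
    have hmain := subsol_main T (fun x p => -H x (-p)) hH'cont hH'hom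
      (fun s => -θ (-s)) hθ'cont hθ'mono (fun x t => -(u x t)) husc' hsub'
    have hmain' : EvolSubsol T (fun x p => -H x (-p)) (fun x t => -(θ (u x t))) := by
      simpa using hmain
    exact supersol_of_neg_subsol hmain'

/-- invariance under nondecreasing truncations, one-dimensional version:
for `H` continuous and positively homogeneous in `p` and `θ : ℝ → ℝ` continuous and
nondecreasing, if `u` is an upper semicontinuous viscosity subsolution (resp. a lower
semicontinuous viscosity supersolution) of `∂ₜ u + H(x, ∂ₓ u) = 0` on `ℝ × (0,T)`, then
`θ ∘ u` is again a viscosity subsolution (resp. supersolution). -/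
theorem truncation_invariance
    (T : ℝ) (hT : 0 < T) (H : ℝ → ℝ → ℝ)
    (hHcont : Continuous fun p : ℝ × ℝ => H p.1 p.2)
    (hHhom : ∀ x p : ℝ, ∀ l : ℝ, 0 < l → H x (l * p) = l * H x p)
    (θ : ℝ → ℝ) (hθcont : Continuous θ) (hθmono : Monotone θ)
    (u : ℝ → ℝ → ℝ) :
    (UpperSemicontinuousOn (fun p : ℝ × ℝ => u p.1 p.2) (univ ×ˢ Ioo 0 T) →
      EvolSubsol T H u → EvolSubsol T H (fun x t => θ (u x t))) ∧
    (LowerSemicontinuousOn (fun p : ℝ × ℝ => u p.1 p.2) (univ ×ˢ Ioo 0 T) →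
      EvolSupersol T H u → EvolSupersol T H (fun x t => θ (u x t))) := by
  exact truncation_invariance' T hT H hHcont hHhom θ hθcont hθmono u
end
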